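/- arXiv:1505.00451 — 5 statements merged into one kernel-verified Lean document; each statement's English description precedes it below -/
import Mathlib

section
/- Let I=(a,b) be an open interval, s a strictly increasing continuous function on I, e a fixed point in I. The map sending s̃ ∈ S_s(I) to the set G_{s̃} = {x ∈ I : (ds̃/ds)(x) = 1} (regarded as a ds-a.e. equivalence class) is a bijection from S_s(I) onto G_s(I), with inverse sending G to the function x ↦ ∫_e^x 1_G(y) ds(y). -/
open MeasureTheory Set Filter Topology
open scoped ENNReal

noncomputable section

section Helpers


variable {I : Set ℝ} {μ : Measure ℝ} {s : ℝ → ℝ} {e : ℝ}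

lemma IooSubI (hIc : I.OrdConnected) {c d : ℝ} (hc : c ∈ I) (hd : d ∈ I) :
    Ioo c d ⊆ I :=
  Set.Ioo_subset_Icc_self.trans (hIc.out hc hd)

lemma finIoo (hμ : ∀ c ∈ I, ∀ d ∈ I, c ≤ d → μ (Set.Ioo c d) = ENNReal.ofReal (s d - s c))
    {c d : ℝ} (hc : c ∈ I) (hd : d ∈ I) : μ (Ioo c d) ≠ ∞ := by
  rcases le_total c d with h | h
  · rw [hμ c hc d hd h]; exact ENNReal.ofReal_ne_top
  · rw [Set.Ioo_eq_empty (by exact fun hlt => absurd h (not_le.2 hlt)), measure_empty]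
    exact ENNReal.zero_ne_top

lemma finInterIoo (hμ : ∀ c ∈ I, ∀ d ∈ I, c ≤ d → μ (Set.Ioo c d) = ENNReal.ofReal (s d - s c))
    {c d : ℝ} (hc : c ∈ I) (hd : d ∈ I) (A : Set ℝ) : μ (A ∩ Ioo c d) ≠ ∞ :=
  fun h => finIoo hμ hc hd (eq_top_mono (measure_mono Set.inter_subset_right) h)

lemma atomZero (hIo : IsOpen I) (hcont : ContinuousOn s I)
    (hμ : ∀ c ∈ I, ∀ d ∈ I, c ≤ d → μ (Set.Ioo c d) = ENNReal.ofReal (s d - s c))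
    {x : ℝ} (hx : x ∈ I) : μ {x} = 0 := by
  obtain ⟨δ₀, hδ₀, hball⟩ := Metric.isOpen_iff.1 hIo x hx
  have hfin : μ {x} ≠ ∞ := by
    have hsub : ({x} : Set ℝ) ⊆ Ioo (x - δ₀ / 2) (x + δ₀ / 2) := by
      intro y hy; rcases hy with rfl; constructor <;> linarith
    have hc : x - δ₀ / 2 ∈ I := hball (by
      simp only [Metric.mem_ball, Real.dist_eq]; rw [abs_lt]; constructor <;> linarith)
    have hd : x + δ₀ / 2 ∈ I := hball (by
      simp only [Metric.mem_ball, Real.dist_eq]; rw [abs_lt]; constructor <;> linarith)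
    exact fun h => finIoo hμ hc hd (eq_top_mono (measure_mono hsub) h)
  by_contra h0
  have hr : 0 < (μ {x}).toReal := ENNReal.toReal_pos h0 hfin
  set r := (μ {x}).toReal with hrdef
  have hca : ContinuousAt s x := hcont.continuousAt (hIo.mem_nhds hx)
  rw [Metric.continuousAt_iff] at hca
  obtain ⟨δ₁, hδ₁, hs⟩ := hca (r / 4) (by linarith)
  set δ := min δ₁ δ₀ / 2 with hδdef
  have hδpos : 0 < δ := by positivity
  have hδlt : δ < δ₁ := by
    have : min δ₁ δ₀ ≤ δ₁ := min_le_left _ _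
    simp only [hδdef]; linarith
  have hδlt0 : δ < δ₀ := by
    have : min δ₁ δ₀ ≤ δ₀ := min_le_right _ _
    simp only [hδdef]; linarith
  have hcI : x - δ ∈ I := hball (by simp [Real.dist_eq, abs_lt]; constructor <;> linarith)
  have hdI : x + δ ∈ I := hball (by simp [Real.dist_eq, abs_lt]; constructor <;> linarith)
  have h1 : |s (x + δ) - s x| < r / 4 := hs (by simp [Real.dist_eq, abs_lt]; constructor <;> linarith)
  have h2 : |s (x - δ) - s x| < r / 4 := hs (by simp [Real.dist_eq, abs_lt]; constructor <;> linarith)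
  have hle : μ {x} ≤ μ (Ioo (x - δ) (x + δ)) :=
    measure_mono (by intro y hy; rcases hy with rfl; constructor <;> linarith)
  rw [hμ _ hcI _ hdI (by linarith)] at hle
  have hsd : s (x + δ) - s (x - δ) ≤ r / 2 := by
    rcases abs_lt.1 h1 with ⟨_, h1b⟩
    rcases abs_lt.1 h2 with ⟨h2a, _⟩
    linarith
  have : μ {x} ≤ ENNReal.ofReal (r / 2) :=
    hle.trans (ENNReal.ofReal_le_ofReal hsd)
  have hlt : ENNReal.ofReal (r / 2) < μ {x} := by
    rw [show μ {x} = ENNReal.ofReal r from (ENNReal.ofReal_toReal hfin).symm]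
    exact ENNReal.ofReal_lt_ofReal_iff_of_nonneg (by linarith) |>.2 (by linarith)
  exact absurd (this.trans_lt hlt) (lt_irrefl _)

lemma measureSplit {A : Set ℝ} (hA : MeasurableSet A) {c m d : ℝ}
    (hm : μ {m} = 0) (hcm : c ≤ m) (hmd : m ≤ d) :
    μ (A ∩ Ioo c d) = μ (A ∩ Ioo c m) + μ (A ∩ Ioo m d) := by
  have hdisj : Disjoint (A ∩ Ioo c m) (A ∩ Ioo m d) := by
    rw [Set.disjoint_left]
    rintro y ⟨-, -, hy2⟩ ⟨-, hy3, -⟩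
    exact absurd (hy2.trans hy3) (lt_irrefl _)
  have hunion : μ ((A ∩ Ioo c m) ∪ (A ∩ Ioo m d)) = μ (A ∩ Ioo c m) + μ (A ∩ Ioo m d) :=
    measure_union hdisj (hA.inter measurableSet_Ioo)
  refine le_antisymm ?_ ?_
  · calc μ (A ∩ Ioo c d) ≤ μ (((A ∩ Ioo c m) ∪ (A ∩ Ioo m d)) ∪ {m}) := by
          apply measure_mono
          rintro y ⟨hyA, hy1, hy2⟩
          rcases lt_trichotomy y m with h | h | h
          · exact Or.inl (Or.inl ⟨hyA, hy1, h⟩)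
          · exact Or.inr (by simp [h])
          · exact Or.inl (Or.inr ⟨hyA, h, hy2⟩)
    _ ≤ μ ((A ∩ Ioo c m) ∪ (A ∩ Ioo m d)) + μ {m} := measure_union_le _ _
    _ = μ (A ∩ Ioo c m) + μ (A ∩ Ioo m d) := by rw [hm, add_zero, hunion]
  · rw [← hunion]
    apply measure_mono
    apply Set.union_subset <;> apply Set.inter_subset_inter_right
    · exact Set.Ioo_subset_Ioo le_rfl hmd
    · exact Set.Ioo_subset_Ioo hcm le_rfl

lemma intIndicator {G : Set ℝ} (hG : MeasurableSet G) (c d : ℝ) :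
    ∫ z in Ioo c d, G.indicator (fun _ => (1 : ℝ)) z ∂μ = (μ (G ∩ Ioo c d)).toReal := by
  rw [setIntegral_indicator hG, setIntegral_const, smul_eq_mul, mul_one, Set.inter_comm]; rfl

lemma intOfAe {h : ℝ → ℝ} (hm : Measurable h) (h01 : ∀ᵐ x ∂μ, h x = 0 ∨ h x = 1) (c d : ℝ) :
    ∫ z in Ioo c d, h z ∂μ = (μ ({x | h x = 1} ∩ Ioo c d)).toReal := by
  have hae : h =ᵐ[μ] ({x | h x = 1}).indicator (fun _ => (1 : ℝ)) := by
    filter_upwards [h01] with x hx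
    rcases hx with hx | hx
    · rw [Set.indicator_of_notMem (by simp [hx]) _, hx]
    · rw [Set.indicator_of_mem (by simpa using hx) _, hx]
  rw [integral_congr_ae (ae_restrict_of_ae hae)]
  exact intIndicator (show MeasurableSet {x | h x = 1} from hm (measurableSet_singleton 1)) c d


lemma nullDiff (hIo : IsOpen I) (hIc : I.OrdConnected)
    (hμ : ∀ c ∈ I, ∀ d ∈ I, c ≤ d → μ (Set.Ioo c d) = ENNReal.ofReal (s d - s c))
    {G G' : Set ℝ} (hG : MeasurableSet G) (hG' : MeasurableSet G') (hGI : G ⊆ I)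
    (heq : ∀ c ∈ I, ∀ d ∈ I, μ (G ∩ Ioo c d) = μ (G' ∩ Ioo c d)) :
    μ (G \ G') = 0 := by
  have key : ∀ c ∈ I, ∀ d ∈ I, μ ((G \ G') ∩ Ioo c d) = 0 := by
    intro c hc d hd
    have hres : μ.restrict (G ∩ Ioo c d) = μ.restrict (G' ∩ Ioo c d) := by
      haveI hfin : IsFiniteMeasure (μ.restrict (G ∩ Ioo c d)) := ⟨by
        rw [Measure.restrict_apply_univ]
        exact lt_top_iff_ne_top.2 (finInterIoo hμ hc hd G)⟩
      refine ext_of_generate_finite _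
        (BorelSpace.measurable_eq.trans Real.borel_eq_generateFrom_Ioo_rat)
        Real.isPiSystem_Ioo_rat ?_ ?_
      · intro A hA
        simp only [Set.mem_iUnion, Set.mem_singleton_iff] at hA
        obtain ⟨p, q, hpq, rfl⟩ := hA
        rw [Measure.restrict_apply measurableSet_Ioo,
          Measure.restrict_apply measurableSet_Ioo,
          Set.inter_left_comm, Set.inter_left_comm (Ioo (p:ℝ) q),
          Set.Ioo_inter_Ioo]
        by_cases hlt : ((p : ℝ) ⊔ c) < ((q : ℝ) ⊓ d)
        · have h1 : ((p : ℝ) ⊔ c) ∈ I := hIc.out hc hd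
            ⟨le_sup_right, (hlt.trans_le inf_le_right).le⟩
          have h2 : ((q : ℝ) ⊓ d) ∈ I := hIc.out hc hd
            ⟨(le_sup_right.trans_lt hlt).le, inf_le_right⟩
          exact heq _ h1 _ h2
        · rw [Set.Ioo_eq_empty hlt]; simp
      · rw [Measure.restrict_apply_univ, Measure.restrict_apply_univ]
        exact heq c hc d hd
    have happ := congrArg (fun ρ : Measure ℝ => ρ (G \ G')) hres
    simp only [Measure.restrict_apply (hG.diff hG')] at happ
    have hL : (G \ G') ∩ (G ∩ Ioo c d) = (G \ G') ∩ Ioo c d := by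
      ext y; constructor
      · rintro ⟨hy1, -, hy3⟩; exact ⟨hy1, hy3⟩
      · rintro ⟨hy1, hy3⟩; exact ⟨hy1, hy1.1, hy3⟩
    have hR : (G \ G') ∩ (G' ∩ Ioo c d) = ∅ := by
      ext y; simp only [Set.mem_inter_iff, Set.mem_diff, Set.mem_empty_iff_false, iff_false]
      rintro ⟨⟨-, hy2⟩, hy3, -⟩; exact hy2 hy3
    rw [hL, hR, measure_empty] at happ
    exact happ
  have hcover : G \ G' ⊆ ⋃ (pq : ℚ × ℚ), ⋃ (_ : ((pq.1 : ℝ) ∈ I ∧ (pq.2 : ℝ) ∈ I)),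
      ((G \ G') ∩ Ioo (pq.1 : ℝ) (pq.2 : ℝ)) := by
    intro x hx
    have hxI : x ∈ I := hGI hx.1
    obtain ⟨δ, hδ, hball⟩ := Metric.isOpen_iff.1 hIo x hxI
    obtain ⟨p, hp1, hp2⟩ := exists_rat_btwn (show x - δ < x by linarith)
    obtain ⟨q, hq1, hq2⟩ := exists_rat_btwn (show x < x + δ by linarith)
    have hpI : (p : ℝ) ∈ I := hball (by
      simp only [Metric.mem_ball, Real.dist_eq]; rw [abs_lt]; constructor <;> linarith)
    have hqI : (q : ℝ) ∈ I := hball (by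
      simp only [Metric.mem_ball, Real.dist_eq]; rw [abs_lt]; constructor <;> linarith)
    exact Set.mem_iUnion.2 ⟨(p, q), Set.mem_iUnion.2 ⟨⟨hpI, hqI⟩, hx, hp2, hq1⟩⟩
  exact measure_mono_null hcover (measure_iUnion_null fun pq =>
    measure_iUnion_null fun hpq => key _ hpq.1 _ hpq.2)


end Helpers


/-- `h` is a (0-1 valued) density of the scaling function `t` with respect to the
Lebesgue–Stieltjes measure `μ` of `s` on the interval `I`: `t(y) - t(x) = ∫_x^y h dμ`
for `x ≤ y` in `I`, with `h = 0` or `1` `μ`-a.e. -/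
def IsScalingDensity (I : Set ℝ) (μ : Measure ℝ) (t : ℝ → ℝ) (h : ℝ → ℝ) : Prop :=
  Measurable h ∧ (∀ᵐ x ∂μ, h x = 0 ∨ h x = 1) ∧
    ∀ x ∈ I, ∀ y ∈ I, x ≤ y → t y - t x = ∫ z in Set.Ioo x y, h z ∂μ

/-- The class `S_s(I)`: strictly increasing continuous functions `t` on `I` with
`t(e) = 0`, `t ≪ s` and `dt/ds = 0` or `1` `ds`-a.e.; `μ` is the measure `ds`. -/
def memS (I : Set ℝ) (e : ℝ) (μ : Measure ℝ) (t : ℝ → ℝ) : Prop :=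
  StrictMonoOn t I ∧ ContinuousOn t I ∧ t e = 0 ∧
    ∃ h : ℝ → ℝ, IsScalingDensity I μ t h

/-- The class `G_s(I)`: Borel subsets `G` of `I` with `∫_{G ∩ (c,d)} ds > 0` for all
`c < d` in `I`; `μ` is the measure `ds`. -/
def memG (I : Set ℝ) (μ : Measure ℝ) (G : Set ℝ) : Prop :=
  MeasurableSet G ∧ G ⊆ I ∧ ∀ c ∈ I, ∀ d ∈ I, c < d → 0 < μ (G ∩ Set.Ioo c d)

/-- The scaling function `x ↦ ∫_e^x 1_G(y) ds(y)` associated with a characteristic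
set `G`; `μ` is the measure `ds`. -/
def scalOf (e : ℝ) (μ : Measure ℝ) (G : Set ℝ) (x : ℝ) : ℝ :=
  if e ≤ x then (μ (G ∩ Set.Ioo e x)).toReal else -(μ (G ∩ Set.Ioo x e)).toReal

/-- `g` represents the derivative `du/dt` of `u` with respect to the scaling function
with Lebesgue–Stieltjes measure `ν`, with `g ∈ L²(I, ν)`. -/
def IsDerivRep (I : Set ℝ) (ν : Measure ℝ) (u : ℝ → ℝ) (g : ℝ → ℝ) : Prop :=
  Measurable g ∧ MemLp g 2 ν ∧
    ∀ x ∈ I, ∀ y ∈ I, x ≤ y → u y - u x = ∫ z in Set.Ioo x y, g z ∂ν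

/-- The space `F^{(t,m)} = {u ∈ L²(I,m) : u ≪ t, du/dt ∈ L²(I, dt)}`, where `ν` is the
Lebesgue–Stieltjes measure `dt` of the scaling function `t`. -/
def memF (I : Set ℝ) (m ν : Measure ℝ) (u : ℝ → ℝ) : Prop :=
  MemLp u 2 m ∧ ∃ g : ℝ → ℝ, IsDerivRep I ν u g

/-- for an open interval `I = (a,b)`, a strictly increasing continuous
function `s` on `I` with Lebesgue–Stieltjes measure `μ = ds`, and a fixed `e ∈ I`,
the map sending `s̃ ∈ S_s(I)` to its characteristic set
`G_{s̃} = {x ∈ I : (ds̃/ds)(x) = 1}` (as a `ds`-a.e. equivalence class) is a bijection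
from `S_s(I)` onto `G_s(I)`, with inverse `G ↦ (x ↦ ∫_e^x 1_G(y) ds(y))`. -/
theorem stmt_0 (I : Set ℝ) (hne : I.Nonempty) (hIo : IsOpen I) (hIc : I.OrdConnected)
    (e : ℝ) (he : e ∈ I)
    (s : ℝ → ℝ) (hmono : StrictMonoOn s I) (hcont : ContinuousOn s I)
    (μ : Measure ℝ) (hμI : μ Iᶜ = 0)
    (hμ : ∀ c ∈ I, ∀ d ∈ I, c ≤ d → μ (Set.Ioo c d) = ENNReal.ofReal (s d - s c)) :
    -- the map is well defined: the characteristic set of `s̃ ∈ S_s(I)` lies in `G_s(I)`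
    (∀ t h, memS I e μ t → IsScalingDensity I μ t h → memG I μ {x ∈ I | h x = 1}) ∧
    -- it does not depend on the choice of density, up to `ds`-null sets
    (∀ t h h', memS I e μ t → IsScalingDensity I μ t h → IsScalingDensity I μ t h' →
      ({x ∈ I | h x = 1} : Set ℝ) =ᵐ[μ] ({x ∈ I | h' x = 1} : Set ℝ)) ∧
    -- injectivity: `ds`-a.e. equal characteristic sets give equal scaling functions
    (∀ t t' h h', memS I e μ t → memS I e μ t' →
      IsScalingDensity I μ t h → IsScalingDensity I μ t' h' →
      ({x ∈ I | h x = 1} : Set ℝ) =ᵐ[μ] ({x ∈ I | h' x = 1} : Set ℝ) →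
      Set.EqOn t t' I) ∧
    -- surjectivity: every `G ∈ G_s(I)` is (a.e.) the characteristic set of
    -- `x ↦ ∫_e^x 1_G ds`, which belongs to `S_s(I)` with density `1_G`
    (∀ G, memG I μ G → memS I e μ (scalOf e μ G) ∧
      IsScalingDensity I μ (scalOf e μ G) (G.indicator fun _ => (1 : ℝ))) ∧
    -- inverse formula: `s̃` is recovered from its characteristic set
    (∀ t h, memS I e μ t → IsScalingDensity I μ t h →
      Set.EqOn t (scalOf e μ {x ∈ I | h x = 1}) I) := by

  have hIoo : ∀ {c d : ℝ}, c ∈ I → d ∈ I → Ioo c d ⊆ I := fun hc hd => IooSubI hIc hc hd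
  have hfin : ∀ {c d : ℝ}, c ∈ I → d ∈ I → ∀ A : Set ℝ, μ (A ∩ Ioo c d) ≠ ∞ :=
    fun hc hd A => finInterIoo hμ hc hd A
  have hatom : ∀ {x : ℝ}, x ∈ I → μ {x} = 0 := fun hx => atomZero hIo hcont hμ hx
  have hsepEq : ∀ (h : ℝ → ℝ) {c d : ℝ}, c ∈ I → d ∈ I →
      ({x ∈ I | h x = 1} ∩ Ioo c d : Set ℝ) = {x | h x = 1} ∩ Ioo c d := by
    intro h c d hc hd
    ext y
    simp only [Set.mem_inter_iff, Set.mem_sep_iff, Set.mem_setOf_eq]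
    exact ⟨fun ⟨⟨_, h1⟩, h2⟩ => ⟨h1, h2⟩, fun ⟨h1, h2⟩ => ⟨⟨hIoo hc hd h2, h1⟩, h2⟩⟩
  have hsepMeas : ∀ h : ℝ → ℝ, Measurable h → MeasurableSet {x ∈ I | h x = 1} := by
    intro h hm
    have : {x ∈ I | h x = 1} = I ∩ h ⁻¹' {1} := by
      ext y; simp [Set.mem_sep_iff]
    rw [this]
    exact hIo.measurableSet.inter (hm (measurableSet_singleton 1))
  have key : ∀ t h : ℝ → ℝ, IsScalingDensity I μ t h → ∀ x ∈ I, ∀ y ∈ I, x ≤ y →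
      t y - t x = (μ ({z ∈ I | h z = 1} ∩ Ioo x y)).toReal := by
    rintro t h ⟨hm, h01, hint⟩ x hx y hy hxy
    rw [hint x hx y hy hxy, intOfAe hm h01 x y, ← hsepEq h hx hy]
  have hdiff : ∀ G : Set ℝ, MeasurableSet G → ∀ x ∈ I, ∀ y ∈ I, x ≤ y →
      scalOf e μ G y - scalOf e μ G x = (μ (G ∩ Ioo x y)).toReal := by
    intro G hGm x hx y hy hxy
    simp only [scalOf]
    rcases le_or_gt e x with hex | hex
    · rw [if_pos (hex.trans hxy), if_pos hex,
        measureSplit hGm (hatom hx) hex hxy,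
        ENNReal.toReal_add (hfin he hx G) (hfin hx hy G)]
      ring
    · rcases le_or_gt e y with hey | hey
      · rw [if_pos hey, if_neg (not_le.2 hex),
          show μ (G ∩ Ioo x y) = μ (G ∩ Ioo x e) + μ (G ∩ Ioo e y) from
            measureSplit hGm (hatom he) hex.le hey,
          ENNReal.toReal_add (hfin hx he G) (hfin he hy G)]
        ring
      · rw [if_neg (not_le.2 hey), if_neg (not_le.2 (hxy.trans_lt hey)),
          show μ (G ∩ Ioo x e) = μ (G ∩ Ioo x y) + μ (G ∩ Ioo y e) from
            measureSplit hGm (hatom hy) hxy hey.le,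
          ENNReal.toReal_add (hfin hx hy G) (hfin hy he G)]
        ring
  refine ⟨?_, ?_, ?_, ?_, ?_⟩
  · -- well-definedness
    rintro t h ht hdens
    refine ⟨hsepMeas h hdens.1, fun x hx => hx.1, ?_⟩
    intro c hc d hd' hcd
    have hpos : 0 < t d - t c := sub_pos.2 (ht.1 hc hd' hcd)
    rw [key t h hdens c hc d hd' hcd.le] at hpos
    refine pos_iff_ne_zero.2 fun h0 => ?_
    rw [h0, ENNReal.toReal_zero] at hpos
    exact lt_irrefl 0 hpos
  · -- independence of density
    rintro t h h' ht hd hd'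
    have heq : ∀ c ∈ I, ∀ d ∈ I,
        μ ({x ∈ I | h x = 1} ∩ Ioo c d) = μ ({x ∈ I | h' x = 1} ∩ Ioo c d) := by
      intro c hc d hdI
      rcases le_or_gt c d with hcd | hcd
      · exact (ENNReal.toReal_eq_toReal_iff' (hfin hc hdI _) (hfin hc hdI _)).1
          ((key t h hd c hc d hdI hcd).symm.trans (key t h' hd' c hc d hdI hcd))
      · rw [Set.Ioo_eq_empty (not_lt.2 hcd.le)]; simp
    exact ae_eq_set.2
      ⟨nullDiff hIo hIc hμ (hsepMeas h hd.1) (hsepMeas h' hd'.1) (fun x hx => hx.1) heq,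
       nullDiff hIo hIc hμ (hsepMeas h' hd'.1) (hsepMeas h hd.1) (fun x hx => hx.1)
        (fun c hc d hdI => (heq c hc d hdI).symm)⟩
  · -- injectivity
    rintro t t' h h' ht ht' hd hd' hae
    have hmeq : ∀ c ∈ I, ∀ d ∈ I,
        μ ({x ∈ I | h x = 1} ∩ Ioo c d) = μ ({x ∈ I | h' x = 1} ∩ Ioo c d) :=
      fun c _ d _ => measure_congr (hae.inter (Filter.EventuallyEq.refl _ _))
    intro x hx
    rcases le_total x e with hxe | hex
    · have h1 := key t h hd x hx e he hxe
      have h2 := key t' h' hd' x hx e he hxe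
      rw [ht.2.2.1] at h1
      rw [ht'.2.2.1] at h2
      rw [hmeq x hx e he] at h1
      linarith
    · have h1 := key t h hd e he x hx hex
      have h2 := key t' h' hd' e he x hx hex
      rw [ht.2.2.1] at h1
      rw [ht'.2.2.1] at h2
      rw [hmeq e he x hx] at h1
      linarith
  · -- surjectivity
    rintro G ⟨hGm, hGI, hGpos⟩
    have hdf := hdiff G hGm
    have hdens : IsScalingDensity I μ (scalOf e μ G) (G.indicator fun _ => (1 : ℝ)) := by
      refine ⟨measurable_const.indicator hGm, Eventually.of_forall fun x => ?_, ?_⟩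
      · by_cases hx : x ∈ G <;> simp [hx]
      · intro x hx y hy hxy
        rw [hdf x hx y hy hxy, intIndicator hGm]
    have hmonoF : StrictMonoOn (scalOf e μ G) I := by
      intro x hx y hy hxy
      have hd1 := hdf x hx y hy hxy.le
      have hpos : 0 < (μ (G ∩ Ioo x y)).toReal :=
        ENNReal.toReal_pos (hGpos x hx y hy hxy).ne' (hfin hx hy G)
      linarith
    have hbound : ∀ x ∈ I, ∀ y ∈ I, x ≤ y →
        scalOf e μ G y - scalOf e μ G x ≤ s y - s x := by
      intro x hx y hy hxy
      rw [hdf x hx y hy hxy]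
      have hle : μ (G ∩ Ioo x y) ≤ ENNReal.ofReal (s y - s x) := by
        rw [← hμ x hx y hy hxy]
        exact measure_mono Set.inter_subset_right
      exact ENNReal.toReal_le_of_le_ofReal (sub_nonneg.2 (hmono.monotoneOn hx hy hxy)) hle
    have hnonnegF : ∀ x ∈ I, ∀ y ∈ I, x ≤ y →
        0 ≤ scalOf e μ G y - scalOf e μ G x := by
      intro x hx y hy hxy
      rw [hdf x hx y hy hxy]
      exact ENNReal.toReal_nonneg
    have hcontF : ContinuousOn (scalOf e μ G) I := by
      intro x₀ hx₀
      apply ContinuousAt.continuousWithinAt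
      rw [Metric.continuousAt_iff]
      intro ε hε
      have hsca : ContinuousAt s x₀ := hcont.continuousAt (hIo.mem_nhds hx₀)
      rw [Metric.continuousAt_iff] at hsca
      obtain ⟨δ₁, hδ₁, hs⟩ := hsca ε hε
      obtain ⟨δ₀, hδ₀, hball⟩ := Metric.isOpen_iff.1 hIo x₀ hx₀
      refine ⟨min δ₁ δ₀, lt_min hδ₁ hδ₀, fun {y} hy => ?_⟩
      have hyI : y ∈ I := hball (lt_of_lt_of_le hy (min_le_right _ _))
      have hys : dist (s y) (s x₀) < ε := hs (lt_of_lt_of_le hy (min_le_left _ _))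
      rw [Real.dist_eq] at hys ⊢
      rcases le_total x₀ y with hxy | hxy
      · calc |scalOf e μ G y - scalOf e μ G x₀|
            = scalOf e μ G y - scalOf e μ G x₀ := abs_of_nonneg (hnonnegF x₀ hx₀ y hyI hxy)
          _ ≤ s y - s x₀ := hbound x₀ hx₀ y hyI hxy
          _ ≤ |s y - s x₀| := le_abs_self _
          _ < ε := hys
      · rw [abs_sub_comm] at hys ⊢
        calc |scalOf e μ G x₀ - scalOf e μ G y|
            = scalOf e μ G x₀ - scalOf e μ G y := abs_of_nonneg (hnonnegF y hyI x₀ hx₀ hxy)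
          _ ≤ s x₀ - s y := hbound y hyI x₀ hx₀ hxy
          _ ≤ |s x₀ - s y| := le_abs_self _
          _ < ε := hys
    have hFe : scalOf e μ G e = 0 := by simp [scalOf]
    exact ⟨⟨hmonoF, hcontF, hFe, ⟨_, hdens⟩⟩, hdens⟩
  · -- inverse formula
    rintro t h ht hdns
    intro x hx
    rcases lt_trichotomy e x with hex | hex | hex
    · have h1 := key t h hdns e he x hx hex.le
      rw [ht.2.2.1] at h1
      simp only [scalOf]
      rw [if_pos hex.le]
      linarith
    · rw [← hex]
      simp [scalOf, ht.2.2.1]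
    · have h1 := key t h hdns x hx e he hex.le
      rw [ht.2.2.1] at h1
      simp only [scalOf]
      rw [if_neg (not_le.2 hex)]
      linarith
end
end

section
/- Let G ∈ G_s(I) with associated scaling function s̃(x) = ∫_e^x 1_G ds, and let F = I \ G. Then a function u belongs to F^{(s̃,m)} if and only if u ∈ F^{(s,m)} and du/ds = 0 ds-a.e. on F. -/
open MeasureTheory Set Filter Topology
open scoped ENNReal

noncomputable section

/-- let `G ∈ G_s(I)` with scaling function `s̃(x) = ∫_e^x 1_G ds` (whose
Lebesgue–Stieltjes measure is `μ.restrict G`), and `F = I \ G`. Then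
`u ∈ F^{(s̃,m)}` iff `u ∈ F^{(s,m)}` and `du/ds = 0` `ds`-a.e. on `F`. -/
theorem stmt_1 (I : Set ℝ) (hne : I.Nonempty) (hIo : IsOpen I) (hIc : I.OrdConnected)
    (e : ℝ) (he : e ∈ I)
    (s : ℝ → ℝ) (hmono : StrictMonoOn s I) (hcont : ContinuousOn s I)
    (μ : Measure ℝ) (hμI : μ Iᶜ = 0)
    (hμ : ∀ c ∈ I, ∀ d ∈ I, c ≤ d → μ (Set.Ioo c d) = ENNReal.ofReal (s d - s c))
    -- `m` is a fully supported Radon measure on `I`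
    (m : Measure ℝ) [IsLocallyFiniteMeasure m]
    (hm : ∀ c ∈ I, ∀ d ∈ I, c < d → 0 < m (Set.Ioo c d))
    (G : Set ℝ) (hG : memG I μ G) (u : ℝ → ℝ) :
    memF I m (μ.restrict G) u ↔
      MemLp u 2 m ∧ ∃ g : ℝ → ℝ, IsDerivRep I μ u g ∧
        ∀ᵐ x ∂μ, x ∈ I \ G → g x = 0 := by
  constructor
  · rintro ⟨hu, g, hgm, hg2, hint⟩
    refine ⟨hu, G.indicator g, ⟨hgm.indicator hG.1, (memLp_indicator_iff_restrict hG.1).2 hg2, ?_⟩, ?_⟩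
    · intro x hx y hy hxy
      rw [hint x hx y hy hxy, Measure.restrict_restrict measurableSet_Ioo,
        setIntegral_indicator hG.1, Set.inter_comm]
    · filter_upwards with x hx
      exact Set.indicator_of_notMem hx.2 g
  · rintro ⟨hu, g, ⟨hgm, hg2, hint⟩, hg0⟩
    have hae : ∀ᵐ x ∂μ, x ∈ I := by
      rw [ae_iff]
      exact hμI
    have heq : g =ᵐ[μ] G.indicator g := by
      filter_upwards [hae, hg0] with x hxI hx0
      by_cases hxG : x ∈ G
      · rw [Set.indicator_of_mem hxG]
      · rw [Set.indicator_of_notMem hxG, hx0 ⟨hxI, hxG⟩]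
    refine ⟨hu, g, hgm, hg2.restrict _, ?_⟩
    intro x hx y hy hxy
    rw [hint x hx y hy hxy, Measure.restrict_restrict measurableSet_Ioo,
      ← Set.inter_comm G]
    calc ∫ z in Set.Ioo x y, g z ∂μ
        = ∫ z in Set.Ioo x y, G.indicator g z ∂μ :=
          setIntegral_congr_ae measurableSet_Ioo (heq.mono fun x h _ => h)
      _ = ∫ z in Set.Ioo x y ∩ G, g z ∂μ := setIntegral_indicator hG.1
      _ = ∫ z in G ∩ Set.Ioo x y, g z ∂μ := by rw [Set.inter_comm]
end
end

section
/- If G₁ ⊂ G₂ are both in G_s(I), with associated scaling functions s₁, s₂ (sᵢ(x) = ∫_e^x 1_{Gᵢ} ds), then F^{(s₁,m)} ⊂ F^{(s₂,m)} and for all u, v ∈ F^{(s₁,m)} one has ∫_I (du/ds₁)(dv/ds₁) ds₁ = ∫_I (du/ds₂)(dv/ds₂) ds₂. -/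
open MeasureTheory Set Filter Topology
open scoped ENNReal

noncomputable section

private lemma ofReal_eq_ofReal_neg {a : ℝ} (h : ENNReal.ofReal a = ENNReal.ofReal (-a)) :
    a = 0 := by
  rcases le_or_gt a 0 with h1 | h1
  · rcases le_or_gt 0 a with h2 | h2
    · linarith
    · exfalso
      rw [ENNReal.ofReal_eq_zero.2 h1] at h
      exact absurd h.symm (ne_of_gt (ENNReal.ofReal_pos.2 (by linarith)))
  · exfalso
    rw [ENNReal.ofReal_eq_zero.2 (by linarith : -a ≤ 0)] at h
    exact absurd h (ne_of_gt (ENNReal.ofReal_pos.2 h1))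

private lemma ae_zero_aux (I : Set ℝ) (hIo : IsOpen I) (hIc : I.OrdConnected)
    (ν : Measure ℝ) (hνI : ν Iᶜ = 0)
    (hfin : ∀ c ∈ I, ∀ d ∈ I, ν (Set.Ioo c d) < ⊤)
    (f : ℝ → ℝ) (hf : Measurable f)
    (hint : ∀ c ∈ I, ∀ d ∈ I, IntegrableOn f (Set.Ioo c d) ν)
    (h0 : ∀ x ∈ I, ∀ y ∈ I, x ≤ y → ∫ z in Set.Ioo x y, f z ∂ν = 0) :
    ∀ᵐ x ∂ν, f x = 0 := by
  -- lintegral equality over good intervals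
  have lint_eq : ∀ a ∈ I, ∀ b ∈ I, a ≤ b →
      ∫⁻ z in Set.Ioo a b, ENNReal.ofReal (f z) ∂ν
        = ∫⁻ z in Set.Ioo a b, ENNReal.ofReal (-f z) ∂ν := by
    intro a ha b hb hab
    have hI := hint a ha b hb
    have h1 := integral_eq_lintegral_pos_part_sub_lintegral_neg_part hI
    rw [h0 a ha b hb hab] at h1
    have hfin1 := hI.lintegral_lt_top
    have hfin2 := hI.neg.lintegral_lt_top
    simp only [Pi.neg_apply] at hfin2
    have := sub_eq_zero.mp h1.symm
    exact (ENNReal.toReal_eq_toReal_iff' hfin1.ne hfin2.ne).mp this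
  -- a.e. zero on each good interval
  have key : ∀ c ∈ I, ∀ d ∈ I, ∀ᵐ x ∂(ν.restrict (Set.Ioo c d)), f x = 0 := by
    intro c hc d hd
    rcases le_or_gt d c with hdc | hcd
    · rw [Set.Ioo_eq_empty (by exact fun h => absurd hdc (not_le.2 h)), Measure.restrict_empty]
      simp
    set π := ν.restrict (Set.Ioo c d) with hπ
    haveI : IsFiniteMeasure π := ⟨by
      rw [hπ, Measure.restrict_apply_univ]; exact hfin c hc d hd⟩
    have hintcd : Integrable f π := hint c hc d hd
    set A := π.withDensity (fun z => ENNReal.ofReal (f z)) with hA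
    set B := π.withDensity (fun z => ENNReal.ofReal (-f z)) with hB
    have hIccI : Set.Icc c d ⊆ I := hIc.out hc hd
    -- compute A and B on Ioo with endpoints in I via restriction
    have hcompute : ∀ a b : ℝ,
        ∫⁻ z in Set.Ioo a b, ENNReal.ofReal (f z) ∂π
          = ∫⁻ z in Set.Ioo a b, ENNReal.ofReal (-f z) ∂π := by
      intro a b
      rw [hπ, Measure.restrict_restrict measurableSet_Ioo, Set.Ioo_inter_Ioo]
      rcases lt_or_ge (a ⊔ c) (b ⊓ d) with hlt | hle
      · have ha' : a ⊔ c ∈ I := hIccI ⟨le_sup_right, le_trans hlt.le inf_le_right⟩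
        have hb' : b ⊓ d ∈ I := hIccI ⟨le_trans le_sup_right hlt.le, inf_le_right⟩
        exact lint_eq _ ha' _ hb' hlt.le
      · rw [Set.Ioo_eq_empty (not_lt.2 hle), Measure.restrict_empty]
        simp
    have hAfin : IsFiniteMeasure A := ⟨by
      rw [hA, withDensity_apply _ MeasurableSet.univ, Measure.restrict_univ]
      calc ∫⁻ z, ENNReal.ofReal (f z) ∂π ≤ ∫⁻ z, ‖f z‖₊ ∂π := by
            refine lintegral_mono fun z => ?_
            rw [← enorm_eq_nnnorm, Real.enorm_eq_ofReal_abs]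
            exact ENNReal.ofReal_le_ofReal (le_abs_self _)
        _ < ⊤ := hintcd.2⟩
    have hBfin : IsFiniteMeasure B := ⟨by
      rw [hB, withDensity_apply _ MeasurableSet.univ, Measure.restrict_univ]
      calc ∫⁻ z, ENNReal.ofReal (-f z) ∂π ≤ ∫⁻ z, ‖f z‖₊ ∂π := by
            refine lintegral_mono fun z => ?_
            rw [← enorm_eq_nnnorm, Real.enorm_eq_ofReal_abs]
            exact ENNReal.ofReal_le_ofReal (by rw [abs_eq_max_neg]; exact le_max_right _ _)
        _ < ⊤ := hintcd.2⟩
    have hAB : A = B := by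
      refine MeasureTheory.ext_of_generate_finite _
        Real.borel_eq_generateFrom_Ioo_rat Real.isPiSystem_Ioo_rat ?_ ?_
      · intro t ht
        simp only [Set.mem_iUnion, Set.mem_singleton_iff] at ht
        obtain ⟨a, b, -, rfl⟩ := ht
        rw [hA, hB, withDensity_apply _ measurableSet_Ioo,
          withDensity_apply _ measurableSet_Ioo]
        exact hcompute _ _
      · rw [hA, hB, withDensity_apply _ MeasurableSet.univ,
          withDensity_apply _ MeasurableSet.univ, Measure.restrict_univ]
        exact lint_eq c hc d hd hcd.le
    -- deduce a.e. equality of densities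
    have hae : (fun z => ENNReal.ofReal (f z)) =ᵐ[π] fun z => ENNReal.ofReal (-f z) := by
      refine ae_eq_of_forall_setLIntegral_eq_of_sigmaFinite
        (ENNReal.measurable_ofReal.comp hf)
        (ENNReal.measurable_ofReal.comp hf.neg) fun t ht htfin => ?_
      have h1 : A t = B t := by rw [hAB]
      rwa [hA, hB, withDensity_apply _ ht, withDensity_apply _ ht] at h1
    filter_upwards [hae] with x hx using ofReal_eq_ofReal_neg hx
  -- cover I by rational intervals with endpoints in I
  set S : Set (ℚ × ℚ) := {p | (p.1 : ℝ) ∈ I ∧ (p.2 : ℝ) ∈ I} with hS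
  have hSc : S.Countable := S.to_countable
  have hae : ∀ᵐ x ∂ν, ∀ p ∈ S, x ∈ Set.Ioo ((p.1 : ℚ) : ℝ) ((p.2 : ℚ) : ℝ) → f x = 0 := by
    rw [ae_ball_iff hSc]
    intro p hp
    exact (ae_restrict_iff' measurableSet_Ioo).mp (key _ hp.1 _ hp.2)
  have hIae : ∀ᵐ x ∂ν, x ∈ I := by
    rw [ae_iff]
    exact measure_mono_null (fun x hx => by simpa using hx) hνI
  filter_upwards [hae, hIae] with x hx hxI
  obtain ⟨ε, hε, hball⟩ := Metric.isOpen_iff.mp hIo x hxI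
  rw [Real.ball_eq_Ioo] at hball
  obtain ⟨q1, hq1, hq1'⟩ := exists_rat_btwn (show x - ε < x by linarith)
  obtain ⟨q2, hq2, hq2'⟩ := exists_rat_btwn (show x < x + ε by linarith)
  have hq1I : ((q1 : ℚ) : ℝ) ∈ I := hball ⟨hq1, by linarith⟩
  have hq2I : ((q2 : ℚ) : ℝ) ∈ I := hball ⟨by linarith, hq2'⟩
  exact hx (q1, q2) ⟨hq1I, hq2I⟩ ⟨hq1', hq2⟩

/-- if `G₁ ⊆ G₂` are both in `G_s(I)`, with associated scaling functions
`s₁, s₂` (whose Lebesgue–Stieltjes measures are `μ.restrict G₁`, `μ.restrict G₂`),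
then `F^{(s₁,m)} ⊆ F^{(s₂,m)}` and for all `u, v ∈ F^{(s₁,m)}` the energies agree:
`∫ (du/ds₁)(dv/ds₁) ds₁ = ∫ (du/ds₂)(dv/ds₂) ds₂`. -/
theorem stmt_2 (I : Set ℝ) (hne : I.Nonempty) (hIo : IsOpen I) (hIc : I.OrdConnected)
    (e : ℝ) (he : e ∈ I)
    (s : ℝ → ℝ) (hmono : StrictMonoOn s I) (hcont : ContinuousOn s I)
    (μ : Measure ℝ) (hμI : μ Iᶜ = 0)
    (hμ : ∀ c ∈ I, ∀ d ∈ I, c ≤ d → μ (Set.Ioo c d) = ENNReal.ofReal (s d - s c))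
    (m : Measure ℝ) [IsLocallyFiniteMeasure m]
    (hm : ∀ c ∈ I, ∀ d ∈ I, c < d → 0 < m (Set.Ioo c d))
    (G₁ G₂ : Set ℝ) (hG₁ : memG I μ G₁) (hG₂ : memG I μ G₂) (hsub : G₁ ⊆ G₂) :
    (∀ u : ℝ → ℝ, memF I m (μ.restrict G₁) u → memF I m (μ.restrict G₂) u) ∧
    (∀ u v gu gv gu' gv' : ℝ → ℝ, MemLp u 2 m → MemLp v 2 m →
      IsDerivRep I (μ.restrict G₁) u gu → IsDerivRep I (μ.restrict G₁) v gv →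
      IsDerivRep I (μ.restrict G₂) u gu' → IsDerivRep I (μ.restrict G₂) v gv' →
      ∫ x, gu x * gv x ∂(μ.restrict G₁) = ∫ x, gu' x * gv' x ∂(μ.restrict G₂)) := by
  obtain ⟨hG₁m, hG₁I, -⟩ := hG₁
  obtain ⟨hG₂m, hG₂I, -⟩ := hG₂
  set ν₁ := μ.restrict G₁ with hν₁
  set ν₂ := μ.restrict G₂ with hν₂
  have hres : ν₂.restrict G₁ = ν₁ := by
    rw [hν₂, hν₁, Measure.restrict_restrict hG₁m, Set.inter_eq_self_of_subset_left hsub]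
  -- integral over Ioo of indicator wrt ν₂ equals integral wrt ν₁
  have key_int : ∀ (g : ℝ → ℝ) (x y : ℝ),
      ∫ z in Set.Ioo x y, G₁.indicator g z ∂ν₂ = ∫ z in Set.Ioo x y, g z ∂ν₁ := by
    intro g x y
    rw [setIntegral_indicator hG₁m, hν₂, hν₁,
      Measure.restrict_restrict (measurableSet_Ioo.inter hG₁m),
      Measure.restrict_restrict measurableSet_Ioo]
    congr 1
    rw [Set.inter_assoc, Set.inter_eq_self_of_subset_left hsub]
  -- Memℒp transfer for indicator
  have key_ℒp : ∀ (g : ℝ → ℝ), MemLp g 2 ν₁ → MemLp (G₁.indicator g) 2 ν₂ := by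
    intro g hg
    rw [memLp_indicator_iff_restrict hG₁m, hres]
    exact hg
  -- if g is a deriv rep wrt ν₁ then G₁.indicator g is one wrt ν₂
  have key_rep : ∀ (u g : ℝ → ℝ), IsDerivRep I ν₁ u g →
      IsDerivRep I ν₂ u (G₁.indicator g) := by
    rintro u g ⟨hgm, hgL, hgint⟩
    exact ⟨hgm.indicator hG₁m, key_ℒp g hgL,
      fun x hx y hy hxy => by rw [key_int]; exact hgint x hx y hy hxy⟩
  -- basic facts about ν₂
  have hν₂I : ν₂ Iᶜ = 0 := by
    rw [hν₂, Measure.restrict_apply hIo.measurableSet.compl]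
    exact measure_mono_null Set.inter_subset_left hμI
  have hν₂fin : ∀ c ∈ I, ∀ d ∈ I, ν₂ (Set.Ioo c d) < ⊤ := by
    intro c hc d hd
    rcases le_or_gt c d with hcd | hcd
    · calc ν₂ (Set.Ioo c d) ≤ μ (Set.Ioo c d) := Measure.restrict_le_self _
        _ = ENNReal.ofReal (s d - s c) := hμ c hc d hd hcd
        _ < ⊤ := ENNReal.ofReal_lt_top
    · rw [Set.Ioo_eq_empty (not_lt.2 hcd.le)]
      simp
  -- integrability on Ioo c d wrt ν₂ of any Memℒp 2 function
  have hIntOn : ∀ (g : ℝ → ℝ), MemLp g 2 ν₂ → ∀ c ∈ I, ∀ d ∈ I,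
      IntegrableOn g (Set.Ioo c d) ν₂ := by
    intro g hg c hc d hd
    haveI : IsFiniteMeasure (ν₂.restrict (Set.Ioo c d)) := ⟨by
      rw [Measure.restrict_apply_univ]; exact hν₂fin c hc d hd⟩
    exact (hg.restrict (Set.Ioo c d)).integrable one_le_two
  -- uniqueness: any ν₂-deriv rep of u equals G₁.indicator g a.e.
  have key_ae : ∀ (u g g' : ℝ → ℝ), IsDerivRep I ν₁ u g → IsDerivRep I ν₂ u g' →
      g' =ᵐ[ν₂] G₁.indicator g := by
    rintro u g g' hg ⟨hg'm, hg'L, hg'int⟩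
    obtain ⟨hgm2, hgL2, hgint2⟩ := key_rep u g hg
    have h0 : ∀ x ∈ I, ∀ y ∈ I, x ≤ y →
        ∫ z in Set.Ioo x y, (g' z - G₁.indicator g z) ∂ν₂ = 0 := by
      intro x hx y hy hxy
      rw [integral_sub (hIntOn g' hg'L x hx y hy) (hIntOn _ hgL2 x hx y hy),
        ← hg'int x hx y hy hxy, ← hgint2 x hx y hy hxy, sub_self]
    have hz := ae_zero_aux I hIo hIc ν₂ hν₂I hν₂fin
      (fun z => g' z - G₁.indicator g z) (hg'm.sub (hgm2))
      (fun c hc d hd => (hIntOn g' hg'L c hc d hd).sub (hIntOn _ hgL2 c hc d hd)) h0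
    filter_upwards [hz] with x hx
    linarith [hx]
  refine ⟨?_, ?_⟩
  · rintro u ⟨huL, g, hg⟩
    exact ⟨huL, G₁.indicator g, key_rep u g hg⟩
  · intro u v gu gv gu' gv' huL hvL hgu hgv hgu' hgv'
    have hu_ae := key_ae u gu gu' hgu hgu'
    have hv_ae := key_ae v gv gv' hgv hgv'
    have h1 : ∫ x, gu' x * gv' x ∂ν₂ = ∫ x, G₁.indicator gu x * G₁.indicator gv x ∂ν₂ := by
      refine integral_congr_ae ?_
      filter_upwards [hu_ae, hv_ae] with x h1 h2
      rw [h1, h2]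
    have h2 : (fun x => G₁.indicator gu x * G₁.indicator gv x)
        = G₁.indicator (fun x => gu x * gv x) := by
      funext x
      by_cases hx : x ∈ G₁ <;> simp [Set.indicator_of_mem, Set.indicator_of_notMem, hx]
    rw [h1, h2, integral_indicator hG₁m, hres]
end
end

section
/- Let (Gₙ)ₙ be a decreasing sequence in G_s(I) with Gₙ ↓ G ds-a.e., where G ∈ G_s(I). If u ∈ F^{(sₙ,m)} for every n (sₙ the scaling function of Gₙ), then u ∈ F^{(s̃,m)}, where s̃ is the scaling function of G. -/
open MeasureTheory Set Filter Topology
open scoped ENNReal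

noncomputable section

/-- π-system: open intervals with endpoints in `I`, together with measurable subsets of `Iᶜ`. -/
def piC (I : Set ℝ) : Set (Set ℝ) :=
  {S | ∃ p ∈ I, ∃ q ∈ I, S = Set.Ioo p q} ∪
    {S | ∃ B : Set ℝ, MeasurableSet B ∧ S = B ∩ Iᶜ}

lemma piC_isPiSystem {I : Set ℝ} (hIc : I.OrdConnected) : IsPiSystem (piC I) := by
  have hIooI : ∀ p ∈ I, ∀ q ∈ I, Set.Ioo p q ⊆ I := fun p hp q hq =>
    Set.Ioo_subset_Icc_self.trans (hIc.out hp hq)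
  rintro S (⟨p, hp, q, hq, rfl⟩ | ⟨B, hB, rfl⟩) T (⟨p', hp', q', hq', rfl⟩ | ⟨B', hB', rfl⟩) hST
  · refine Or.inl ⟨max p p', ?_, min q q', ?_, Set.Ioo_inter_Ioo⟩
    · rcases max_choice p p' with h | h <;> rw [h] <;> assumption
    · rcases min_choice q q' with h | h <;> rw [h] <;> assumption
  · obtain ⟨x, hx1, hx2⟩ := hST
    exact absurd (hIooI p hp q hq hx1) hx2.2
  · obtain ⟨x, hx1, hx2⟩ := hST
    exact absurd (hIooI p' hp' q' hq' hx2) hx1.2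
  · refine Or.inr ⟨B ∩ B', hB.inter hB', ?_⟩
    ext x; simp; tauto

lemma open_subset_mem_piC_generate {I : Set ℝ} (hIo : IsOpen I) {U : Set ℝ}
    (hU : IsOpen U) (hUI : U ⊆ I) :
    MeasurableSet[MeasurableSpace.generateFrom (piC I)] U := by
  have : U = ⋃ pq : ℚ × ℚ, ⋃ (_ : ((pq.1 : ℝ) ∈ I ∧ (pq.2 : ℝ) ∈ I ∧
      Set.Ioo (pq.1 : ℝ) (pq.2 : ℝ) ⊆ U)), Set.Ioo (pq.1 : ℝ) (pq.2 : ℝ) := by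
    ext x
    simp only [Set.mem_iUnion]
    constructor
    · intro hx
      obtain ⟨ε, hε, hball⟩ := Metric.isOpen_iff.1 hU x hx
      rw [Real.ball_eq_Ioo] at hball
      obtain ⟨p, hp1, hp2⟩ := exists_rat_btwn (show x - ε < x by linarith)
      obtain ⟨q, hq1, hq2⟩ := exists_rat_btwn (show x < x + ε by linarith)
      have hsub : Set.Ioo (p : ℝ) (q : ℝ) ⊆ U := fun z hz =>
        hball ⟨lt_trans hp1 hz.1, lt_trans hz.2 hq2⟩
      have hpU : (p : ℝ) ∈ U := hball ⟨hp1, lt_trans hp2 (lt_trans hq1 hq2)⟩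
      have hqU : (q : ℝ) ∈ U := hball ⟨lt_trans hp1 (lt_trans hp2 hq1), hq2⟩
      exact ⟨(p, q), ⟨hUI hpU, hUI hqU, hsub⟩, hp2, hq1⟩
    · rintro ⟨⟨p, q⟩, ⟨-, -, hsub⟩, hx⟩
      exact hsub hx
  rw [this]
  exact MeasurableSet.iUnion fun pq => MeasurableSet.iUnion fun h =>
    MeasurableSpace.measurableSet_generateFrom (Or.inl ⟨_, h.1, _, h.2.1, rfl⟩)

lemma piC_generates {I : Set ℝ} (hIo : IsOpen I) :
    (inferInstance : MeasurableSpace ℝ) = MeasurableSpace.generateFrom (piC I) := by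
  refine le_antisymm ?_ ?_
  · rw [BorelSpace.measurable_eq (α := ℝ), Real.borel_eq_generateFrom_Ioo_rat]
    refine MeasurableSpace.generateFrom_le ?_
    rintro S hS
    simp only [Set.mem_iUnion, Set.mem_singleton_iff] at hS
    obtain ⟨a, b, -, rfl⟩ := hS
    have : Set.Ioo (a : ℝ) b = (Set.Ioo (a : ℝ) b ∩ I) ∪ (Set.Ioo (a : ℝ) b ∩ Iᶜ) :=
      (Set.inter_union_compl _ I).symm
    rw [this]
    refine MeasurableSet.union ?_ ?_
    · exact open_subset_mem_piC_generate hIo (isOpen_Ioo.inter hIo) Set.inter_subset_right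
    · exact MeasurableSpace.measurableSet_generateFrom
        (Or.inr ⟨Set.Ioo (a : ℝ) b, measurableSet_Ioo, rfl⟩)
  · refine MeasurableSpace.generateFrom_le ?_
    rintro S (⟨p, -, q, -, rfl⟩ | ⟨B, hB, rfl⟩)
    · exact measurableSet_Ioo
    · exact hB.inter hIo.measurableSet.compl

lemma ae_le_of_forall_integral_Ioo_eq {I : Set ℝ} (hne : I.Nonempty) (hIo : IsOpen I)
    (hIc : I.OrdConnected) (μ : Measure ℝ) (hμI : μ Iᶜ = 0)
    {f f' : ℝ → ℝ} (hf : Measurable f) (hf' : Measurable f')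
    (hint : ∀ x ∈ I, ∀ y ∈ I, x ≤ y → IntegrableOn f (Set.Ioo x y) μ)
    (hint' : ∀ x ∈ I, ∀ y ∈ I, x ≤ y → IntegrableOn f' (Set.Ioo x y) μ)
    (heq : ∀ x ∈ I, ∀ y ∈ I, x ≤ y →
      ∫ z in Set.Ioo x y, f z ∂μ = ∫ z in Set.Ioo x y, f' z ∂μ) :
    ∀ᵐ x ∂μ, f x ≤ f' x := by
  classical
  obtain ⟨e, he⟩ := hne
  set ν₁ := μ.withDensity fun x => ENNReal.ofReal (f x - f' x) with hν₁
  set ν₂ := μ.withDensity fun x => ENNReal.ofReal (f' x - f x) with hν₂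
  have habs₁ : ν₁ ≪ μ := withDensity_absolutelyContinuous μ _
  have habs₂ : ν₂ ≪ μ := withDensity_absolutelyContinuous μ _
  have key : ∀ p ∈ I, ∀ q ∈ I, p ≤ q →
      ν₁ (Set.Ioo p q) = ν₂ (Set.Ioo p q) ∧ ν₁ (Set.Ioo p q) ≠ ⊤ := by
    intro p hp q hq hpq
    have hi := hint p hp q hq hpq
    have hi' := hint' p hp q hq hpq
    have hsub : Integrable (fun z => f z - f' z) (μ.restrict (Set.Ioo p q)) := hi.sub hi'
    have h0 : ∫ z in Set.Ioo p q, (f z - f' z) ∂μ = 0 := by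
      rw [integral_sub hi hi', heq p hp q hq hpq, sub_self]
    rw [integral_eq_lintegral_pos_part_sub_lintegral_neg_part hsub] at h0
    have hrw : (fun z => ENNReal.ofReal (-(f z - f' z)))
        = fun z => ENNReal.ofReal (f' z - f z) := by
      funext z; rw [neg_sub]
    rw [hrw] at h0
    have hA : ∫⁻ z in Set.Ioo p q, ENNReal.ofReal (f z - f' z) ∂μ ≠ ⊤ :=
      hsub.lintegral_lt_top.ne
    have hB : ∫⁻ z in Set.Ioo p q, ENNReal.ofReal (f' z - f z) ∂μ ≠ ⊤ := by
      have := (hsub.neg).lintegral_lt_top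
      simp only [Pi.neg_apply, neg_sub] at this
      exact this.ne
    have hAB : ∫⁻ z in Set.Ioo p q, ENNReal.ofReal (f z - f' z) ∂μ
        = ∫⁻ z in Set.Ioo p q, ENNReal.ofReal (f' z - f z) ∂μ :=
      (ENNReal.toReal_eq_toReal_iff' hA hB).mp (sub_eq_zero.mp h0)
    have e1 : ν₁ (Set.Ioo p q) = ∫⁻ z in Set.Ioo p q, ENNReal.ofReal (f z - f' z) ∂μ :=
      withDensity_apply _ measurableSet_Ioo
    have e2 : ν₂ (Set.Ioo p q) = ∫⁻ z in Set.Ioo p q, ENNReal.ofReal (f' z - f z) ∂μ :=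
      withDensity_apply _ measurableSet_Ioo
    exact ⟨by rw [e1, e2, hAB], by rw [e1]; exact hA⟩
  set T : Set (Set ℝ) := insert Iᶜ
    ((fun pq : ℚ × ℚ => Set.Ioo (pq.1 : ℝ) (pq.2 : ℝ)) ''
      {pq : ℚ × ℚ | (pq.1 : ℝ) ∈ I ∧ (pq.2 : ℝ) ∈ I}) with hT
  have hTc : T.Countable :=
    ((Set.to_countable _).image _).insert _
  have hTsub : T ⊆ piC I := by
    rintro S (rfl | ⟨⟨p, q⟩, ⟨hp, hq⟩, rfl⟩)
    · exact Or.inr ⟨Set.univ, MeasurableSet.univ, (Set.univ_inter _).symm⟩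
    · exact Or.inl ⟨_, hp, _, hq, rfl⟩
  have hTU : ⋃₀ T = Set.univ := by
    ext x
    simp only [Set.mem_sUnion, Set.mem_univ, iff_true]
    by_cases hx : x ∈ I
    · obtain ⟨ε, hε, hball⟩ := Metric.isOpen_iff.1 hIo x hx
      rw [Real.ball_eq_Ioo] at hball
      obtain ⟨p, hp1, hp2⟩ := exists_rat_btwn (show x - ε < x by linarith)
      obtain ⟨q, hq1, hq2⟩ := exists_rat_btwn (show x < x + ε by linarith)
      have hpI : (p : ℝ) ∈ I := hball ⟨hp1, lt_trans hp2 (lt_trans hq1 hq2)⟩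
      have hqI : (q : ℝ) ∈ I := hball ⟨lt_trans hp1 (lt_trans hp2 hq1), hq2⟩
      exact ⟨Set.Ioo (p : ℝ) (q : ℝ),
        Set.mem_insert_iff.mpr (Or.inr ⟨(p, q), ⟨hpI, hqI⟩, rfl⟩), hp2, hq1⟩
    · exact ⟨Iᶜ, Set.mem_insert _ _, hx⟩
  have hμB : ∀ S ∈ T, ν₁ S ≠ ⊤ := by
    rintro S (rfl | ⟨⟨p, q⟩, ⟨hp, hq⟩, rfl⟩)
    · rw [habs₁ hμI]; exact ENNReal.zero_ne_top
    · simp only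
      rcases le_or_gt (p : ℝ) (q : ℝ) with hle | hlt
      · exact (key _ hp _ hq hle).2
      · rw [Set.Ioo_eq_empty (not_lt.mpr hlt.le)]; simp
  have h_eq : ∀ S ∈ piC I, ν₁ S = ν₂ S := by
    rintro S (⟨p, hp, q, hq, rfl⟩ | ⟨B, hB, rfl⟩)
    · rcases le_or_gt p q with hle | hlt
      · exact (key p hp q hq hle).1
      · rw [Set.Ioo_eq_empty (not_lt.mpr hlt.le)]
        simp
    · have hnull : μ (B ∩ Iᶜ) = 0 :=
        measure_mono_null Set.inter_subset_right hμI
      rw [habs₁ hnull, habs₂ hnull]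
  have hν : ν₁ = ν₂ :=
    MeasureTheory.Measure.ext_of_generateFrom_of_cover_subset (piC_generates hIo)
      (piC_isPiSystem hIc) hTsub hTc hTU hμB h_eq
  have hAset : MeasurableSet {x | f' x < f x} := measurableSet_lt hf' hf
  have h2 : ν₂ {x | f' x < f x} = 0 := by
    rw [hν₂, withDensity_apply _ hAset]
    rw [setLIntegral_congr_fun hAset (fun x hx =>
      show ENNReal.ofReal (f' x - f x) = (0 : ℝ≥0∞) from
        ENNReal.ofReal_eq_zero.mpr (by simp only [Set.mem_setOf_eq] at hx; linarith))]
    simp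
  have h1 : ν₁ {x | f' x < f x} = 0 := by rw [hν]; exact h2
  rw [hν₁, withDensity_apply _ hAset] at h1
  have hz := (lintegral_eq_zero_iff ((hf.sub hf').ennreal_ofReal)).mp h1
  have hz' := (ae_restrict_iff' hAset).mp hz
  filter_upwards [hz'] with x hx
  by_contra hle
  push_neg at hle
  have h0 := hx hle
  simp only [Pi.zero_apply, Pi.sub_apply, ENNReal.ofReal_eq_zero] at h0
  linarith

lemma ae_eq_of_forall_integral_Ioo_eq {I : Set ℝ} (hne : I.Nonempty) (hIo : IsOpen I)
    (hIc : I.OrdConnected) (μ : Measure ℝ) (hμI : μ Iᶜ = 0)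
    {f f' : ℝ → ℝ} (hf : Measurable f) (hf' : Measurable f')
    (hint : ∀ x ∈ I, ∀ y ∈ I, x ≤ y → IntegrableOn f (Set.Ioo x y) μ)
    (hint' : ∀ x ∈ I, ∀ y ∈ I, x ≤ y → IntegrableOn f' (Set.Ioo x y) μ)
    (heq : ∀ x ∈ I, ∀ y ∈ I, x ≤ y →
      ∫ z in Set.Ioo x y, f z ∂μ = ∫ z in Set.Ioo x y, f' z ∂μ) :
    f =ᵐ[μ] f' := by
  have h1 := ae_le_of_forall_integral_Ioo_eq hne hIo hIc μ hμI hf hf' hint hint' heq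
  have h2 := ae_le_of_forall_integral_Ioo_eq hne hIo hIc μ hμI hf' hf hint' hint
    (fun x hx y hy hxy => (heq x hx y hy hxy).symm)
  filter_upwards [h1, h2] with x hx1 hx2
  exact le_antisymm hx1 hx2

lemma indicator_pieces {I : Set ℝ} (μ : Measure ℝ)
    (hμfin : ∀ x ∈ I, ∀ y ∈ I, x ≤ y → μ (Set.Ioo x y) ≠ ⊤)
    {A : Set ℝ} (hA : MeasurableSet A) {g u : ℝ → ℝ}
    (hgL2 : MemLp g 2 (μ.restrict A))
    (hrep : ∀ x ∈ I, ∀ y ∈ I, x ≤ y →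
      u y - u x = ∫ z in Set.Ioo x y, g z ∂(μ.restrict A)) :
    (∀ x ∈ I, ∀ y ∈ I, x ≤ y → IntegrableOn (A.indicator g) (Set.Ioo x y) μ) ∧
    (∀ x ∈ I, ∀ y ∈ I, x ≤ y →
      ∫ z in Set.Ioo x y, A.indicator g z ∂μ = u y - u x) := by
  have hres : ∀ x y : ℝ,
      (μ.restrict A).restrict (Set.Ioo x y) = μ.restrict (Set.Ioo x y ∩ A) :=
    fun x y => Measure.restrict_restrict measurableSet_Ioo
  constructor
  · intro x hx y hy hxy
    haveI hfm : IsFiniteMeasure ((μ.restrict A).restrict (Set.Ioo x y)) := by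
      constructor
      rw [hres]
      calc μ.restrict (Set.Ioo x y ∩ A) Set.univ = μ (Set.Ioo x y ∩ A) := by
            simp [Measure.restrict_apply_univ]
        _ ≤ μ (Set.Ioo x y) := measure_mono Set.inter_subset_left
        _ < ⊤ := (hμfin x hx y hy hxy).lt_top
    have hInt : Integrable g ((μ.restrict A).restrict (Set.Ioo x y)) :=
      (hgL2.mono_measure Measure.restrict_le_self).integrable one_le_two
    rw [hres] at hInt
    refine (integrable_indicator_iff hA).mpr ?_
    rw [IntegrableOn, Measure.restrict_restrict hA, Set.inter_comm]
    exact hInt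
  · intro x hx y hy hxy
    rw [setIntegral_indicator hA, hrep x hx y hy hxy, hres]

/-- let `(Gₙ)` be a decreasing sequence in `G_s(I)` with `Gₙ ↓ G`
`ds`-a.e., `G ∈ G_s(I)`. If `u ∈ F^{(sₙ,m)}` for every `n` (where `sₙ` is the scaling
function of `Gₙ`, with Lebesgue–Stieltjes measure `μ.restrict Gₙ`), then
`u ∈ F^{(s̃,m)}` (where `s̃` is the scaling function of `G`). -/
theorem stmt_3 (I : Set ℝ) (hne : I.Nonempty) (hIo : IsOpen I) (hIc : I.OrdConnected)
    (e : ℝ) (he : e ∈ I)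
    (s : ℝ → ℝ) (hmono : StrictMonoOn s I) (hcont : ContinuousOn s I)
    (μ : Measure ℝ) (hμI : μ Iᶜ = 0)
    (hμ : ∀ c ∈ I, ∀ d ∈ I, c ≤ d → μ (Set.Ioo c d) = ENNReal.ofReal (s d - s c))
    (m : Measure ℝ) [IsLocallyFiniteMeasure m]
    (hm : ∀ c ∈ I, ∀ d ∈ I, c < d → 0 < m (Set.Ioo c d))
    (Gn : ℕ → Set ℝ) (hGn : ∀ n, memG I μ (Gn n))
    (hdec : ∀ n, Gn (n + 1) ⊆ Gn n)
    (G : Set ℝ) (hG : memG I μ G)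
    (hcap : (⋂ n, Gn n) =ᵐ[μ] G)
    (u : ℝ → ℝ) (hu : ∀ n, memF I m (μ.restrict (Gn n)) u) :
    memF I m (μ.restrict G) u := by
  have hL2u := (hu 0).1
  choose g hg using fun n => (hu n).2
  have hgm : ∀ n, Measurable (g n) := fun n => (hg n).1
  have hgL2 : ∀ n, MemLp (g n) 2 (μ.restrict (Gn n)) := fun n => (hg n).2.1
  have hgrep : ∀ n, ∀ x ∈ I, ∀ y ∈ I, x ≤ y →
      u y - u x = ∫ z in Set.Ioo x y, g n z ∂(μ.restrict (Gn n)) := fun n => (hg n).2.2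
  have hμfin : ∀ x ∈ I, ∀ y ∈ I, x ≤ y → μ (Set.Ioo x y) ≠ ⊤ := fun x hx y hy hxy => by
    rw [hμ x hx y hy hxy]; exact ENNReal.ofReal_ne_top
  have hpieces := fun n => indicator_pieces μ hμfin (hGn n).1 (hgL2 n) (hgrep n)
  set fn : ℕ → ℝ → ℝ := fun n => (Gn n).indicator (g n) with hfn
  have hfnm : ∀ n, Measurable (fn n) := fun n => (hgm n).indicator (hGn n).1
  have hae : ∀ n, fn 0 =ᵐ[μ] fn n := fun n =>
    ae_eq_of_forall_integral_Ioo_eq hne hIo hIc μ hμI (hfnm 0) (hfnm n)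
      (hpieces 0).1 (hpieces n).1
      (fun x hx y hy hxy => by
        rw [(hpieces 0).2 x hx y hy hxy, (hpieces n).2 x hx y hy hxy])
  have hAll : ∀ᵐ x ∂μ, ∀ n, fn 0 x = fn n x := ae_all_iff.2 hae
  have hcapae : ∀ᵐ x ∂μ, (x ∈ ⋂ n, Gn n ↔ x ∈ G) := eventuallyEq_set.mp hcap
  have hind : G.indicator (g 0) =ᵐ[μ] fn 0 := by
    filter_upwards [hAll, hcapae] with x hx hxG
    by_cases hxG' : x ∈ G
    · have hxi : x ∈ ⋂ n, Gn n := hxG.2 hxG'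
      have h0 : x ∈ Gn 0 := Set.mem_iInter.mp hxi 0
      rw [Set.indicator_of_mem hxG']
      exact (Set.indicator_of_mem h0 _).symm
    · have hxi : x ∉ ⋂ n, Gn n := fun h => hxG' (hxG.1 h)
      obtain ⟨n, hn⟩ : ∃ n, x ∉ Gn n := by simpa [Set.mem_iInter] using hxi
      rw [Set.indicator_of_notMem hxG', hx n]
      exact (Set.indicator_of_notMem hn _).symm
  refine ⟨hL2u, g 0, hgm 0, ?_, ?_⟩
  · have hres : μ.restrict G = μ.restrict (⋂ n, Gn n) :=
      (Measure.restrict_congr_set hcap).symm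
    have hle : μ.restrict (⋂ n, Gn n) ≤ μ.restrict (Gn 0) :=
      Measure.restrict_mono (Set.iInter_subset _ 0) le_rfl
    exact (hgL2 0).mono_measure (by rw [hres]; exact hle)
  · intro x hx y hy hxy
    have h1 : ∫ z in Set.Ioo x y, g 0 z ∂(μ.restrict G)
        = ∫ z in Set.Ioo x y ∩ G, g 0 z ∂μ := by
      rw [Measure.restrict_restrict measurableSet_Ioo]
    have h2 : ∫ z in Set.Ioo x y ∩ G, g 0 z ∂μ
        = ∫ z in Set.Ioo x y, G.indicator (g 0) z ∂μ := (setIntegral_indicator hG.1).symm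
    have h3 : ∫ z in Set.Ioo x y, G.indicator (g 0) z ∂μ
        = ∫ z in Set.Ioo x y, fn 0 z ∂μ :=
      integral_congr_ae (ae_restrict_of_ae hind)
    rw [h1, h2, h3, (hpieces 0).2 x hx y hy hxy]
end
end

section
/- Let G ⊂ ℝ be measurable with |G ∩ (c,d)| > 0 for all c < d, F := ℝ \ G, and s̃(x) = ∫_0^x 1_G(y) dy. Then a function u ∈ H¹(ℝ) satisfies u' = 0 a.e. on F if and only if u = φ ∘ s̃ for some absolutely continuous φ with ∫ |φ'(s̃(x))|² ds̃(x) < ∞; i.e., the regular Dirichlet subspace of Brownian motion with characteristic set G is {u ∈ H¹(ℝ) : u' = 0 a.e. on F} with form (1/2)∫_ℝ u'v' dx. -/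
open MeasureTheory Set Filter Topology
open scoped ENNReal

noncomputable section

/-- The scaling function `s̃(x) = ∫_0^x 1_G(y) dy` of a characteristic set `G ⊆ ℝ`. -/
def scalFun (G : Set ℝ) (x : ℝ) : ℝ :=
  ∫ y in (0 : ℝ)..x, G.indicator (fun _ => (1 : ℝ)) y

set_option linter.unusedSectionVars false

namespace Stmt19
variable {G : Set ℝ} (hGm : MeasurableSet G)

include hGm in
lemma indInt (a b : ℝ) : IntervalIntegrable (G.indicator (fun _ => (1:ℝ))) volume a b := by
  constructor <;>
  exact (MeasureTheory.Integrable.indicator (integrable_const 1) hGm)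

include hGm in
lemma sub_eq (a b : ℝ) (hab : a ≤ b) :
    scalFun G b - scalFun G a = (volume (G ∩ Ioc a b)).toReal := by
  have h1 : scalFun G b - scalFun G a
      = ∫ y in a..b, G.indicator (fun _ => (1:ℝ)) y := by
    rw [scalFun, scalFun,
      ← intervalIntegral.integral_interval_sub_left (indInt hGm 0 b) (indInt hGm 0 a)]
  rw [h1, intervalIntegral.integral_of_le hab, MeasureTheory.integral_indicator hGm,
    setIntegral_const, smul_eq_mul, mul_one, measureReal_def, Measure.restrict_apply hGm, inter_comm]

include hGm in
lemma lip : LipschitzWith 1 (scalFun G) := by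
  apply LipschitzWith.of_dist_le_mul
  intro x y
  wlog h : y ≤ x generalizing x y
  · rw [dist_comm, dist_comm x y]; exact this y x (le_of_not_ge h)
  rw [Real.dist_eq, Real.dist_eq, sub_eq hGm y x h, abs_of_nonneg ENNReal.toReal_nonneg,
    abs_of_nonneg (sub_nonneg.2 h)]
  have : volume (G ∩ Ioc y x) ≤ volume (Ioc y x) := measure_mono inter_subset_right
  rw [Real.volume_Ioc] at this
  calc (volume (G ∩ Ioc y x)).toReal ≤ (ENNReal.ofReal (x - y)).toReal :=
        ENNReal.toReal_mono ENNReal.ofReal_ne_top this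
    _ = x - y := ENNReal.toReal_ofReal (by linarith)
    _ ≤ 1 * (x - y) := by linarith

include hGm in
lemma cont : Continuous (scalFun G) := (lip hGm).continuous

variable (hGpos : ∀ c d : ℝ, c < d → 0 < volume (G ∩ Set.Ioo c d))

include hGm hGpos in
lemma smono : StrictMono (scalFun G) := by
  intro a b hab
  have h0 : 0 < volume (G ∩ Ioo a b) := hGpos a b hab
  have h1 : volume (G ∩ Ioc a b) ≤ ENNReal.ofReal (b - a) := by
    calc volume (G ∩ Ioc a b) ≤ volume (Ioc a b) := measure_mono inter_subset_right
      _ = ENNReal.ofReal (b - a) := Real.volume_Ioc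
  have h2 : 0 < volume (G ∩ Ioc a b) :=
    lt_of_lt_of_le h0 (measure_mono (inter_subset_inter_right _ Ioo_subset_Ioc_self))
  have := sub_eq hGm a b hab.le
  have : 0 < (volume (G ∩ Ioc a b)).toReal :=
    ENNReal.toReal_pos h2.ne' (ne_top_of_le_ne_top ENNReal.ofReal_ne_top h1)
  linarith [sub_eq hGm a b hab.le]

section B
variable (s : ℝ → ℝ) (hcont : Continuous s) (hmono : StrictMono s)
  (hsub : ∀ a b : ℝ, a ≤ b → s b - s a = (volume (G ∩ Ioc a b)).toReal)

local notation "μ" => volume.restrict G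

include hGm hsub in
lemma measIoc (a b : ℝ) (hab : a ≤ b) : μ (Ioc a b) = ENNReal.ofReal (s b - s a) := by
  rw [Measure.restrict_apply measurableSet_Ioc, hsub a b hab, inter_comm,
    ENNReal.ofReal_toReal]
  exact ne_top_of_le_ne_top (by rw [Real.volume_Ioc]; exact ENNReal.ofReal_ne_top)
    (measure_mono inter_subset_right)

include hGm hsub in
lemma measIoo (a b : ℝ) (hab : a ≤ b) : μ (Ioo a b) = ENNReal.ofReal (s b - s a) := by
  rcases eq_or_lt_of_le hab with rfl | h
  · simp [hsub a a le_rfl]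
  have h1 : μ (Ioo a b) ≤ μ (Ioc a b) := measure_mono Ioo_subset_Ioc_self
  have h2 : μ (Ioc a b) ≤ μ (Ioo a b) + μ {b} := by
    refine le_trans (measure_mono ?_) (measure_union_le _ _)
    intro x hx
    rcases lt_or_eq_of_le hx.2 with h' | h'
    · exact Or.inl ⟨hx.1, h'⟩
    · exact Or.inr (by simp [h'])
  have h3 : μ {b} = 0 :=
    le_antisymm (le_trans (Measure.restrict_le_self _) (by simp)) zero_le
  rw [h3, add_zero] at h2
  rw [le_antisymm h1 h2, measIoc hGm s hsub a b hab]

include hGm hcont hmono hsub in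
lemma mapIoo (a b : ℝ) (hab : a ≤ b) :
    Measure.map s ((volume.restrict G).restrict (Ioo a b)) = volume.restrict (Ioo (s a) (s b)) := by
  have hemb : MeasurableEmbedding s := hcont.measurableEmbedding hmono.injective
  have hpre : s ⁻¹' (Ioo (s a) (s b)) = Ioo a b := by
    ext x; simp [mem_Ioo, hmono.lt_iff_lt]
  rw [← hpre, ← MeasurableEmbedding.restrict_map hemb]
  haveI : IsFiniteMeasure ((Measure.map s μ).restrict (Ioo (s a) (s b))) := by
    constructor
    rw [Measure.restrict_apply_univ, Measure.map_apply hemb.measurable measurableSet_Ioo,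
      hpre, measIoo hGm s hsub a b hab]
    exact ENNReal.ofReal_lt_top
  apply Measure.ext_of_Iic
  intro v
  rw [Measure.restrict_apply measurableSet_Iic,
    Measure.restrict_apply measurableSet_Iic,
    Measure.map_apply hemb.measurable (measurableSet_Iic.inter measurableSet_Ioo)]
  rcases le_or_gt v (s a) with hv | hv
  · have h1 : s ⁻¹' (Iic v ∩ Ioo (s a) (s b)) = ∅ := by
      apply eq_empty_of_forall_notMem
      intro x hx
      exact absurd (lt_of_le_of_lt (hx.1.trans hv) hx.2.1) (lt_irrefl _)
    have h2 : Iic v ∩ Ioo (s a) (s b) = ∅ := by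
      apply eq_empty_of_forall_notMem
      intro x hx
      exact absurd (lt_of_le_of_lt (hx.1.trans hv) hx.2.1) (lt_irrefl _)
    rw [h1, h2]; simp
  rcases le_or_gt (s b) v with hv' | hv'
  · have h1 : s ⁻¹' (Iic v ∩ Ioo (s a) (s b)) = Ioo a b := by
      ext x
      simp only [mem_preimage, mem_inter_iff, mem_Iic, mem_Ioo, mem_Ioo, hmono.lt_iff_lt]
      exact ⟨fun h => h.2, fun h => ⟨le_trans (le_of_lt (hmono.lt_iff_lt.2 h.2)) hv', h⟩⟩
    have h2 : Iic v ∩ Ioo (s a) (s b) = Ioo (s a) (s b) :=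
      inter_eq_self_of_subset_right (fun x hx => le_trans (le_of_lt hx.2) hv')
    rw [h1, h2, measIoo hGm s hsub a b hab, Real.volume_Ioo]
  · -- s a < v < s b : find c with s c = v
    obtain ⟨c, hc, hsc⟩ : ∃ c ∈ Icc a b, s c = v := by
      have := intermediate_value_Icc hab hcont.continuousOn
      exact (by
        obtain ⟨c, hc, hsc⟩ := this ⟨hv.le, hv'.le⟩
        exact ⟨c, hc, hsc⟩)
    have h1 : s ⁻¹' (Iic v ∩ Ioo (s a) (s b)) = Ioc a c := by
      ext x
      simp only [mem_preimage, mem_inter_iff, mem_Iic, mem_Ioo, mem_Ioc, ← hsc,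
        hmono.le_iff_le, hmono.lt_iff_lt]
      constructor
      · rintro ⟨h1, h2, _⟩; exact ⟨h2, h1⟩
      · rintro ⟨h2, h1⟩
        refine ⟨h1, h2, lt_of_le_of_lt h1 ?_⟩
        rw [← hmono.lt_iff_lt (a := c) (b := b), hsc]
        exact hv'
    have h2 : Iic v ∩ Ioo (s a) (s b) = Ioc (s a) v :=  by
      ext x
      simp only [mem_inter_iff, mem_Iic, mem_Ioo, mem_Ioc]
      exact ⟨fun h => ⟨h.2.1, h.1⟩, fun h => ⟨h.2, h.1, lt_of_le_of_lt h.2 hv'⟩⟩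
    rw [h1, h2, measIoc hGm s hsub a c hc.1, Real.volume_Ioc, hsc]

end B
section C
variable (s : ℝ → ℝ) (hcont : Continuous s) (hmono : StrictMono s)
  (hmap : ∀ a b : ℝ, a ≤ b →
    Measure.map s ((volume.restrict G).restrict (Ioo a b)) = volume.restrict (Ioo (s a) (s b)))

include hcont hmono hmap in
lemma intCV (f : ℝ → ℝ) (a b : ℝ) (hab : a ≤ b) :
    ∫ x in Ioo (s a) (s b), f x = ∫ x in Ioo a b, f (s x) ∂(volume.restrict G) := by
  rw [← hmap a b hab, (hcont.measurableEmbedding hmono.injective).integral_map]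

include hcont hmono hmap in
lemma integrableCV (f : ℝ → ℝ) (a b : ℝ) (hab : a ≤ b) :
    IntegrableOn f (Ioo (s a) (s b)) volume ↔
      IntegrableOn (fun x => f (s x)) (Ioo a b) (volume.restrict G) := by
  rw [IntegrableOn, IntegrableOn, ← hmap a b hab,
    (hcont.measurableEmbedding hmono.injective).integrable_map_iff]
  rfl

include hcont hmono hmap in
lemma lintCV (f : ℝ → ℝ≥0∞) (a b : ℝ) (hab : a ≤ b) :
    ∫⁻ x in Ioo (s a) (s b), f x = ∫⁻ x in Ioo a b, f (s x) ∂(volume.restrict G) := by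
  rw [← hmap a b hab, (hcont.measurableEmbedding hmono.injective).lintegral_map]

include hcont hmono in
lemma rangeUnion : range s = ⋃ n : ℕ, Ioo (s (-(n:ℝ))) (s n) := by
  apply Subset.antisymm
  · rintro r ⟨x, rfl⟩
    obtain ⟨n, hn⟩ := exists_nat_gt |x|
    have h1 : -(n:ℝ) < x := by
      have := abs_lt.1 hn; linarith [neg_abs_le x, le_abs_self x]
    have h2 : x < n := lt_of_le_of_lt (le_abs_self x) hn
    exact mem_iUnion.2 ⟨n, hmono h1, hmono h2⟩
  · refine iUnion_subset fun n => ?_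
    intro r hr
    have hle : -(n:ℝ) ≤ n := neg_le_self (Nat.cast_nonneg n)
    have := intermediate_value_Icc hle hcont.continuousOn
    obtain ⟨x, _, hx⟩ := this ⟨hr.1.le, hr.2.le⟩
    exact ⟨x, hx⟩

include hcont hmono in
lemma rangeMeas : MeasurableSet (range s) := by
  rw [rangeUnion s hcont hmono]
  exact MeasurableSet.iUnion fun n => measurableSet_Ioo

variable (hmIoc : ∀ a b : ℝ, a ≤ b → (volume.restrict G) (Ioc a b) = ENNReal.ofReal (s b - s a))

include hcont hmono hmIoc in
lemma preIccFin (c d : ℝ) :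
    (volume.restrict G) (s ⁻¹' Icc c d) ≤ ENNReal.ofReal (d - c) := by
  set μ := volume.restrict G
  have hU : s ⁻¹' Icc c d = ⋃ n : ℕ, (s ⁻¹' Icc c d ∩ Icc (-(n:ℝ)) n) := by
    apply Subset.antisymm
    · intro x hx
      obtain ⟨n, hn⟩ := exists_nat_gt |x|
      exact mem_iUnion.2 ⟨n, hx, (abs_le.1 hn.le)⟩
    · exact iUnion_subset fun n => inter_subset_left
  have hmon : Monotone fun n : ℕ => s ⁻¹' Icc c d ∩ Icc (-(n:ℝ)) n := by
    intro m n hmn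
    apply inter_subset_inter_right
    apply Icc_subset_Icc <;> simp [Nat.cast_le.2 hmn] <;> exact_mod_cast hmn
  rw [hU, Directed.measure_iUnion hmon.directed_le]
  refine iSup_le fun n => ?_
  set S := s ⁻¹' Icc c d ∩ Icc (-(n:ℝ)) n with hS
  rcases eq_empty_or_nonempty S with h | h
  · simp [h]
  have hcomp : IsCompact S := (isCompact_Icc.inter_left
    ((isClosed_Icc).preimage hcont))
  have hb : BddBelow S ∧ BddAbove S := ⟨hcomp.bddBelow, hcomp.bddAbove⟩
  set a' := sInf S
  set b' := sSup S
  have ha' : a' ∈ S := hcomp.isClosed.csInf_mem h hb.1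
  have hb' : b' ∈ S := hcomp.isClosed.csSup_mem h hb.2
  have hsub' : S ⊆ Icc a' b' := fun x hx => ⟨csInf_le hb.1 hx, le_csSup hb.2 hx⟩
  have hab' : a' ≤ b' := (hsub' ha').2.trans (le_refl _) |>.trans (le_refl _)
  calc μ S ≤ μ (Icc a' b') := measure_mono hsub'
    _ ≤ μ {a'} + μ (Ioc a' b') := by
        refine le_trans (measure_mono ?_) (measure_union_le _ _)
        intro x hx
        rcases eq_or_lt_of_le hx.1 with h' | h'
        · exact Or.inl (by simp [← h'])
        · exact Or.inr ⟨h', hx.2⟩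
    _ = μ (Ioc a' b') := by
        have : μ {a'} = 0 :=
          le_antisymm (le_trans (Measure.restrict_le_self _) (by simp)) zero_le
        rw [this, zero_add]
    _ = ENNReal.ofReal (s b' - s a') := hmIoc a' b' hab'
    _ ≤ ENNReal.ofReal (d - c) := by
        apply ENNReal.ofReal_le_ofReal
        have h1 : c ≤ s a' := ha'.1.1
        have h2 : s b' ≤ d := hb'.1.2
        linarith

end C
section D
variable (s : ℝ → ℝ) (hcont : Continuous s) (hmono : StrictMono s) (hs0 : s 0 = 0)
  (hmIoo : ∀ a b : ℝ, a ≤ b → (volume.restrict G) (Ioo a b) = ENNReal.ofReal (s b - s a))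
  (hrangeM : MeasurableSet (range s))
  (hrangeU : range s = ⋃ n : ℕ, Ioo (s (-(n:ℝ))) (s n))
  (hintCV : ∀ (f : ℝ → ℝ) (a b : ℝ), a ≤ b →
    ∫ x in Ioo (s a) (s b), f x = ∫ x in Ioo a b, f (s x) ∂(volume.restrict G))
  (hintegrableCV : ∀ (f : ℝ → ℝ) (a b : ℝ), a ≤ b →
    (IntegrableOn f (Ioo (s a) (s b)) volume ↔
      IntegrableOn (fun x => f (s x)) (Ioo a b) (volume.restrict G)))
  (hlintCV : ∀ (f : ℝ → ℝ≥0∞) (a b : ℝ), a ≤ b →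
    ∫⁻ x in Ioo (s a) (s b), f x = ∫⁻ x in Ioo a b, f (s x) ∂(volume.restrict G))
  (hpreIccFin : ∀ c d : ℝ, (volume.restrict G) (s ⁻¹' Icc c d) ≤ ENNReal.ofReal (d - c))
  (u g : ℝ → ℝ) (hg : Measurable g) (hg2 : MemLp g 2 volume)
  (hrep : ∀ x y : ℝ, x ≤ y → u y - u x = ∫ t in Set.Ioo x y, g t)

include hGm hcont hmono hs0 hmIoo hrangeM hrangeU hintCV hintegrableCV hlintCV hpreIccFin hg hg2 hrep in
lemma forward (hae : ∀ᵐ x, x ∈ Gᶜ → g x = 0) :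
    ∃ φ : ℝ → ℝ, (∀ x, u x = φ (s x)) ∧
      ∃ ψ : ℝ → ℝ, Measurable ψ ∧ LocallyIntegrable ψ ∧
        (∀ c d : ℝ, c ≤ d → φ d - φ c = ∫ t in Set.Ioo c d, ψ t) ∧
        MemLp (fun x => ψ (s x)) 2 (volume.restrict G) := by
  set μ := volume.restrict G with hμ
  have hemb : MeasurableEmbedding s := hcont.measurableEmbedding hmono.injective
  obtain ⟨G', hG'm, hG'c⟩ := hemb.exists_measurable_extend hg (fun _ => ⟨0⟩)
  set ψ : ℝ → ℝ := (range s).indicator G' with hψdef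
  have hψm : Measurable ψ := hG'm.indicator hrangeM
  have hψcomp : ∀ x, ψ (s x) = g x := fun x => by
    rw [hψdef, indicator_of_mem (mem_range_self x)]; exact congrFun hG'c x
  -- integrals of g against μ equal integrals against volume, on any measurable set
  have hgind : ∀ S : Set ℝ, MeasurableSet S → ∫ x in S, g x ∂μ = ∫ x in S, g x := by
    intro S hS
    have h1 : μ.restrict S = (volume.restrict S).restrict G := by
      rw [hμ, Measure.restrict_restrict hGm, Measure.restrict_restrict hS, inter_comm]
    rw [show ∫ x in S, g x ∂μ = ∫ x, g x ∂(μ.restrict S) from rfl, h1,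
      ← MeasureTheory.integral_indicator hGm]
    apply integral_congr_ae
    filter_upwards [ae_restrict_of_ae hae] with x hx
    by_cases h : x ∈ G
    · rw [indicator_of_mem h]
    · rw [indicator_of_notMem h, hx h]
  -- integrability of g on finite-measure restrictions
  have hgOn : ∀ a b : ℝ, IntegrableOn g (Ioo a b) volume := by
    intro a b
    exact (hg2.restrict _).integrable one_le_two
  -- local integrability of ψ
  have hψInt : ∀ c d : ℝ, c ≤ d → IntegrableOn ψ (Icc c d) volume := by
    intro c d hcd
    refine ⟨hψm.aestronglyMeasurable, ?_⟩
    rw [HasFiniteIntegral]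
    set N : ℝ → ℝ≥0∞ := fun r => ‖G' r‖₊ with hN
    have hNm : Measurable N := hG'm.nnnorm.coe_nnreal_ennreal
    have hptw : ∀ r, (‖ψ r‖₊ : ℝ≥0∞) = (range s).indicator N r := by
      intro r
      by_cases h : r ∈ range s
      · simp [hψdef, hN, indicator_of_mem h]
      · simp [hψdef, hN, indicator_of_notMem h]
    calc ∫⁻ r, (‖ψ r‖₊ : ℝ≥0∞) ∂(volume.restrict (Icc c d))
        = ∫⁻ r, (range s).indicator N r ∂(volume.restrict (Icc c d)) := by
          exact lintegral_congr hptw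
      _ = ∫⁻ r in range s ∩ Icc c d, N r := by
          rw [lintegral_indicator hrangeM, Measure.restrict_restrict hrangeM]
      _ = volume.withDensity N (range s ∩ Icc c d) := (withDensity_apply N
          (hrangeM.inter measurableSet_Icc)).symm
      _ ≤ ∫⁻ x in s ⁻¹' Icc c d, (‖g x‖₊ : ℝ≥0∞) ∂μ := by
          rw [hrangeU, iUnion_inter]
          have hmon : Monotone fun n : ℕ => Ioo (s (-(n:ℝ))) (s (n:ℝ)) ∩ Icc c d := by
            intro m n hmn
            apply inter_subset_inter_left
            apply Ioo_subset_Ioo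
            · exact hmono.monotone (by exact_mod_cast neg_le_neg (Nat.cast_le.2 hmn))
            · exact hmono.monotone (by exact_mod_cast hmn)
          rw [Directed.measure_iUnion hmon.directed_le]
          refine iSup_le fun n => ?_
          rw [withDensity_apply N ((measurableSet_Ioo).inter measurableSet_Icc)]
          have hle : -(n:ℝ) ≤ (n:ℝ) := neg_le_self (Nat.cast_nonneg n)
          calc ∫⁻ r in Ioo (s (-(n:ℝ))) (s n) ∩ Icc c d, N r
              = ∫⁻ r in Ioo (s (-(n:ℝ))) (s n), (Icc c d).indicator N r := by
                rw [lintegral_indicator measurableSet_Icc,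
                  Measure.restrict_restrict measurableSet_Icc, inter_comm]
            _ = ∫⁻ x in Ioo (-(n:ℝ)) n, (Icc c d).indicator N (s x) ∂μ :=
                hlintCV _ _ _ hle
            _ = ∫⁻ x in Ioo (-(n:ℝ)) n, (s ⁻¹' Icc c d).indicator (fun x => (‖g x‖₊ : ℝ≥0∞)) x ∂μ := by
                apply lintegral_congr
                intro x
                by_cases h : s x ∈ Icc c d
                · rw [indicator_of_mem h, indicator_of_mem (by exact h), hN]
                  simp only [← congrFun hG'c x]; rfl
                · rw [indicator_of_notMem h, indicator_of_notMem (by exact h)]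
            _ ≤ ∫⁻ x, (s ⁻¹' Icc c d).indicator (fun x => (‖g x‖₊ : ℝ≥0∞)) x ∂μ :=
                setLIntegral_le_lintegral _ _
            _ = ∫⁻ x in s ⁻¹' Icc c d, (‖g x‖₊ : ℝ≥0∞) ∂μ := by
                rw [lintegral_indicator (measurableSet_Icc.preimage hcont.measurable)]
      _ < ⊤ := by
          have hSm : MeasurableSet (s ⁻¹' Icc c d) := measurableSet_Icc.preimage hcont.measurable
          haveI : IsFiniteMeasure (μ.restrict (s ⁻¹' Icc c d)) := by
            constructor
            rw [Measure.restrict_apply_univ]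
            exact lt_of_le_of_lt (hpreIccFin c d) ENNReal.ofReal_lt_top
          have hg2' : MemLp g 2 (μ.restrict (s ⁻¹' Icc c d)) :=
            hg2.mono_measure (le_trans (Measure.restrict_le_self)
              (by rw [hμ]; exact Measure.restrict_le_self))
          exact (hg2'.integrable one_le_two).2
  have hψloc : LocallyIntegrable ψ volume := by
    rw [locallyIntegrable_iff]
    intro K hK
    obtain ⟨r, hr⟩ := hK.isBounded.subset_closedBall 0
    refine (hψInt (0 - |r|) (0 + |r|) (by have := abs_nonneg r; linarith)).mono_set ?_
    rw [← Real.closedBall_eq_Icc]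
    exact hr.trans (Metric.closedBall_subset_closedBall (le_abs_self r))
  have hψIval : ∀ a b : ℝ, IntervalIntegrable ψ volume a b := by
    intro a b
    exact ⟨(hψInt (min a b) (max a b) min_le_max).mono_set
        (Ioc_subset_Icc_self.trans (Icc_subset_Icc (min_le_left _ _) (le_max_right _ _))),
      (hψInt (min a b) (max a b) min_le_max).mono_set
        (Ioc_subset_Icc_self.trans (Icc_subset_Icc (min_le_right _ _) (le_max_left _ _)))⟩
  set φ : ℝ → ℝ := fun r => u 0 + ∫ t in (0:ℝ)..r, ψ t with hφdef
  have hφrep : ∀ c d : ℝ, c ≤ d → φ d - φ c = ∫ t in Ioo c d, ψ t := by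
    intro c d hcd
    have h1 : φ d - φ c = ∫ t in c..d, ψ t := by
      rw [hφdef]
      simp only [add_sub_add_left_eq_sub]
      exact intervalIntegral.integral_interval_sub_left (hψIval 0 d) (hψIval 0 c)
    rw [h1, intervalIntegral.integral_of_le hcd, integral_Ioc_eq_integral_Ioo]
  have hucomp : ∀ x, u x = φ (s x) := by
    intro x
    rcases le_total 0 x with hx | hx
    · have h0 : s 0 ≤ s x := hmono.monotone hx
      have h2 : ∫ t in (s 0)..(s x), ψ t = u x - u 0 := by
        rw [intervalIntegral.integral_of_le h0,
          integral_Ioc_eq_integral_Ioo, hintCV ψ 0 x hx]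
        calc ∫ y in Ioo 0 x, ψ (s y) ∂μ = ∫ y in Ioo 0 x, g y ∂μ := by
              simp only [hψcomp]
          _ = ∫ y in Ioo 0 x, g y := hgind _ measurableSet_Ioo
          _ = u x - u 0 := (hrep 0 x hx).symm
      show u x = u 0 + ∫ t in (0:ℝ)..(s x), ψ t
      rw [show (∫ t in (0:ℝ)..(s x), ψ t) = ∫ t in (s 0)..(s x), ψ t by rw [hs0], h2]
      ring
    · have h0 : s x ≤ s 0 := hmono.monotone hx
      have h2 : ∫ t in (s x)..(s 0), ψ t = u 0 - u x := by
        rw [intervalIntegral.integral_of_le h0,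
          integral_Ioc_eq_integral_Ioo, hintCV ψ x 0 hx]
        calc ∫ y in Ioo x 0, ψ (s y) ∂μ = ∫ y in Ioo x 0, g y ∂μ := by
              simp only [hψcomp]
          _ = ∫ y in Ioo x 0, g y := hgind _ measurableSet_Ioo
          _ = u 0 - u x := (hrep x 0 hx).symm
      show u x = u 0 + ∫ t in (0:ℝ)..(s x), ψ t
      rw [show (∫ t in (0:ℝ)..(s x), ψ t) = ∫ t in (s 0)..(s x), ψ t by rw [hs0],
        intervalIntegral.integral_symm, h2]
      ring
  have hmem : MemLp (fun x => ψ (s x)) 2 μ := by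
    have heq : (fun x => ψ (s x)) = g := funext hψcomp
    rw [heq, hμ]
    exact hg2.restrict G
  exact ⟨φ, hucomp, ψ, hψm, hψloc, hφrep, hmem⟩

end D
section E
variable (s : ℝ → ℝ) (hcont : Continuous s) (hmono : StrictMono s)
  (hintCV : ∀ (f : ℝ → ℝ) (a b : ℝ), a ≤ b →
    ∫ x in Ioo (s a) (s b), f x = ∫ x in Ioo a b, f (s x) ∂(volume.restrict G))
  (hintegrableCV : ∀ (f : ℝ → ℝ) (a b : ℝ), a ≤ b →
    (IntegrableOn f (Ioo (s a) (s b)) volume ↔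
      IntegrableOn (fun x => f (s x)) (Ioo a b) (volume.restrict G)))
  (u g : ℝ → ℝ) (hg : Measurable g) (hg2 : MemLp g 2 volume)
  (hrep : ∀ x y : ℝ, x ≤ y → u y - u x = ∫ t in Set.Ioo x y, g t)

include hGm hcont hmono hintCV hintegrableCV hg hg2 hrep in
lemma reverse (φ ψ : ℝ → ℝ) (hφ : ∀ x, u x = φ (s x)) (hψm : Measurable ψ)
    (hψloc : LocallyIntegrable ψ)
    (hφrep : ∀ c d : ℝ, c ≤ d → φ d - φ c = ∫ t in Set.Ioo c d, ψ t) :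
    ∀ᵐ x, x ∈ Gᶜ → g x = 0 := by
  set μ := volume.restrict G with hμ
  set q : ℝ → ℝ := G.indicator (fun y => ψ (s y)) with hq
  set h : ℝ → ℝ := fun x => g x - q x with hh
  have hqm : Measurable q := (hψm.comp hcont.measurable).indicator hGm
  -- integrability facts
  have hgOn : ∀ a b : ℝ, IntegrableOn g (Ioo a b) volume := fun a b =>
    (hg2.restrict _).integrable one_le_two
  have hψOn : ∀ a b : ℝ, a ≤ b → IntegrableOn (fun x => ψ (s x)) (Ioo a b) μ := by
    intro a b hab
    exact (hintegrableCV ψ a b hab).1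
      ((hψloc.integrableOn_isCompact isCompact_Icc).mono_set Ioo_subset_Icc_self)
  have hrr : ∀ a b : ℝ, (volume.restrict (Ioo a b)).restrict G = μ.restrict (Ioo a b) := by
    intro a b
    rw [hμ, Measure.restrict_restrict hGm, Measure.restrict_restrict measurableSet_Ioo,
      inter_comm]
  have hqOn : ∀ a b : ℝ, a ≤ b → IntegrableOn q (Ioo a b) volume := by
    intro a b hab
    refine (IntegrableOn.integrable_indicator ?_ hGm)
    rw [IntegrableOn, hrr a b]
    exact hψOn a b hab
  -- zero integral of h on intervals
  have hzero : ∀ a b : ℝ, a ≤ b → ∫ x in Ioo a b, h x = 0 := by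
    intro a b hab
    rw [hh]
    simp only
    rw [integral_sub (hgOn a b) (hqOn a b hab)]
    have h1 : ∫ x in Ioo a b, g x = φ (s b) - φ (s a) := by
      rw [← hrep a b hab, hφ a, hφ b]
    have h2 : ∫ x in Ioo a b, q x = φ (s b) - φ (s a) := by
      rw [hq, MeasureTheory.setIntegral_indicator hGm,
        show ∫ x in Ioo a b ∩ G, ψ (s x) = ∫ x in Ioo a b, ψ (s x) ∂μ by
          rw [hμ, Measure.restrict_restrict measurableSet_Ioo],
        ← hintCV ψ a b hab, hφrep (s a) (s b) (hmono.monotone hab)]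
    rw [h1, h2, sub_self]
  -- local integrability of h
  have hloc : LocallyIntegrable h volume := by
    have hgl : LocallyIntegrable g volume := hg2.locallyIntegrable one_le_two
    have hql : LocallyIntegrable q volume := by
      rw [locallyIntegrable_iff]
      intro K hK
      obtain ⟨r, hr⟩ := hK.isBounded.subset_closedBall 0
      refine (hqOn (0 - |r| - 1) (0 + |r| + 1) (by have := abs_nonneg r; linarith)).mono_set ?_
      refine (hr.trans (Metric.closedBall_subset_closedBall (le_abs_self r))).trans ?_
      rw [Real.closedBall_eq_Icc]
      exact Icc_subset_Ioo (by linarith) (by linarith)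
    exact hgl.sub hql
  -- Lebesgue differentiation
  have hdiff := IsUnifLocDoublingMeasure.ae_tendsto_average_norm_sub (μ := volume) hloc 1
  have hae0 : ∀ᵐ x, h x = 0 := by
    filter_upwards [hdiff] with x hx
    have hten : Tendsto (fun j : ℝ => ⨍ y in Metric.closedBall x j, ‖h y - h x‖)
        (𝓝[>] 0) (𝓝 0) := by
      apply hx (fun _ => x) id tendsto_id
      filter_upwards [self_mem_nhdsWithin] with j hj
      exact Metric.mem_closedBall_self (by simp at hj ⊢; linarith)
    have hbound : ∀ j : ℝ, 0 < j → ‖h x‖ ≤ ⨍ y in Metric.closedBall x j, ‖h y - h x‖ := by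
      intro j hj
      have hIA : IntegrableOn h (Metric.closedBall x j) volume :=
        hloc.integrableOn_isCompact (isCompact_closedBall x j)
      have hmeas : volume (Metric.closedBall x j) = ENNReal.ofReal (2 * j) := by
        rw [Real.closedBall_eq_Icc, Real.volume_Icc]; ring_nf
      have hm0 : (volume (Metric.closedBall x j)).toReal = 2 * j := by
        rw [hmeas, ENNReal.toReal_ofReal (by linarith)]
      have hint0 : ∫ y in Metric.closedBall x j, h y = 0 := by
        rw [Real.closedBall_eq_Icc, integral_Icc_eq_integral_Ioo]
        exact hzero (x - j) (x + j) (by linarith)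
      have havg : ⨍ y in Metric.closedBall x j, (h y - h x) = - h x := by
        rw [setAverage_eq, integral_sub hIA (integrableOn_const (by
          rw [hmeas]; exact ENNReal.ofReal_ne_top)), hint0, setIntegral_const, measureReal_def, hm0]
        rw [zero_sub, smul_eq_mul]
        field_simp
        ring
      calc ‖h x‖ = ‖⨍ y in Metric.closedBall x j, (h y - h x)‖ := by rw [havg, norm_neg]
        _ ≤ ⨍ y in Metric.closedBall x j, ‖h y - h x‖ := by
            rw [setAverage_eq, setAverage_eq, smul_eq_mul, smul_eq_mul, norm_mul,
              Real.norm_eq_abs, abs_of_nonneg (by positivity)]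
            exact mul_le_mul_of_nonneg_left (norm_integral_le_integral_norm _)
              (by positivity)
    have : ‖h x‖ ≤ 0 := by
      refine ge_of_tendsto hten ?_
      filter_upwards [self_mem_nhdsWithin] with j hj
      exact hbound j hj
    simpa using le_antisymm this (norm_nonneg _)
  filter_upwards [hae0] with x hx hxG
  have : q x = 0 := indicator_of_notMem hxG _
  rw [hh] at hx
  simp only at hx
  linarith [hx, this]

end E

end Stmt19

/-- let `G ⊆ ℝ` be measurable with `|G ∩ (c,d)| > 0` for all `c < d`,
`F := ℝ \ G`, and `s̃(x) = ∫_0^x 1_G`. A function `u ∈ H¹(ℝ)` (with `u ∈ L²` and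
derivative `g ∈ L²`) satisfies `u' = 0` a.e. on `F` if and only if `u = φ ∘ s̃` for
some absolutely continuous `φ` with `∫ |φ'(s̃(x))|² ds̃(x) < ∞` (the measure `ds̃`
being `volume.restrict G`): the regular Dirichlet subspace of Brownian motion with
characteristic set `G` is `{u ∈ H¹(ℝ) : u' = 0 a.e. on F}`. -/
theorem stmt_19 (G : Set ℝ) (hGm : MeasurableSet G)
    (hGpos : ∀ c d : ℝ, c < d → 0 < volume (G ∩ Set.Ioo c d))
    (u : ℝ → ℝ) (hu : MemLp u 2 volume)
    (g : ℝ → ℝ) (hg : Measurable g) (hg2 : MemLp g 2 volume)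
    (hrep : ∀ x y : ℝ, x ≤ y → u y - u x = ∫ t in Set.Ioo x y, g t) :
    (∀ᵐ x, x ∈ Gᶜ → g x = 0) ↔
      ∃ φ : ℝ → ℝ, (∀ x, u x = φ (scalFun G x)) ∧
        ∃ ψ : ℝ → ℝ, Measurable ψ ∧ LocallyIntegrable ψ ∧
          (∀ c d : ℝ, c ≤ d → φ d - φ c = ∫ t in Set.Ioo c d, ψ t) ∧
          MemLp (fun x => ψ (scalFun G x)) 2 (volume.restrict G) := by
  have hcont : Continuous (scalFun G) := Stmt19.cont hGm
  have hmono : StrictMono (scalFun G) := Stmt19.smono hGm hGpos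
  have hsub : ∀ a b : ℝ, a ≤ b →
      scalFun G b - scalFun G a = (volume (G ∩ Set.Ioc a b)).toReal :=
    fun a b hab => Stmt19.sub_eq hGm a b hab
  have hs0 : scalFun G 0 = 0 := by simp [scalFun]
  have hmIoc : ∀ a b : ℝ, a ≤ b → (volume.restrict G) (Set.Ioc a b)
      = ENNReal.ofReal (scalFun G b - scalFun G a) :=
    fun a b hab => Stmt19.measIoc hGm (scalFun G) hsub a b hab
  have hmIoo : ∀ a b : ℝ, a ≤ b → (volume.restrict G) (Set.Ioo a b)
      = ENNReal.ofReal (scalFun G b - scalFun G a) :=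
    fun a b hab => Stmt19.measIoo hGm (scalFun G) hsub a b hab
  have hmap : ∀ a b : ℝ, a ≤ b →
      Measure.map (scalFun G) ((volume.restrict G).restrict (Set.Ioo a b))
        = volume.restrict (Set.Ioo (scalFun G a) (scalFun G b)) :=
    fun a b hab => Stmt19.mapIoo hGm (scalFun G) hcont hmono hsub a b hab
  have hintCV := Stmt19.intCV (G := G) (scalFun G) hcont hmono hmap
  have hintegrableCV := Stmt19.integrableCV (G := G) (scalFun G) hcont hmono hmap
  have hlintCV := Stmt19.lintCV (G := G) (scalFun G) hcont hmono hmap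
  have hrangeM := Stmt19.rangeMeas (scalFun G) hcont hmono
  have hrangeU := Stmt19.rangeUnion (scalFun G) hcont hmono
  have hpre := Stmt19.preIccFin (G := G) (scalFun G) hcont hmono hmIoc
  constructor
  · intro hae
    exact Stmt19.forward hGm (scalFun G) hcont hmono hs0 hmIoo hrangeM hrangeU
      hintCV hintegrableCV hlintCV hpre u g hg hg2 hrep hae
  · rintro ⟨φ, hφ, ψ, hψm, hψloc, hφrep, hψ2⟩
    exact Stmt19.reverse hGm (scalFun G) hcont hmono hintCV hintegrableCV
      u g hg hg2 hrep φ ψ hφ hψm hψloc hφrep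
end
end
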